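/- arXiv:1702.02756 — 8 statements merged into one kernel-verified Lean document; each statement's English description precedes it below -/
import Mathlib

section
/- Let u : ℝ³ → ℂ be a smooth solution of the nonlinear Schrödinger equation i·u_t + u_{xx} + u_{yy} + λ|u|^{p−2}u = 0 at every point (x,y,t) ∈ ℝ³. Then at every point (x,y,t) the following virial-type identity holds (as an equality of complex numbers, real quantities being regarded as complex): ∂_y( (y−1/2)·(|u_y|² − |u_x|²) ) = 2|u_y|² − 2·∂_x( Re((y−1/2)·u_y·conj(u_x)) ) − i·∂_t( (y−1/2)·u·conj(u_y) ) + i·∂_y( (y−1/2)·conj(u_t)·u ) − ∂_x( u·conj(u_x) ) − ∂_y( u·conj(u_y) ) − λ(1 − 2/p)|u|^p − (2λ/p)·∂_y( (y−1/2)·|u|^p ). -/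
open Complex

/-- Partial derivative in the first (`x`) variable. -/
noncomputable def ux (u : ℝ → ℝ → ℝ → ℂ) (x y t : ℝ) : ℂ := deriv (fun x' => u x' y t) x
/-- Partial derivative in the second (`y`) variable. -/
noncomputable def uy (u : ℝ → ℝ → ℝ → ℂ) (x y t : ℝ) : ℂ := deriv (fun y' => u x y' t) y
/-- Partial derivative in the third (`t`) variable. -/
noncomputable def ut (u : ℝ → ℝ → ℝ → ℂ) (x y t : ℝ) : ℂ := deriv (fun t' => u x y t') t
/-- Second partial derivative in `x`. -/
noncomputable def uxx (u : ℝ → ℝ → ℝ → ℂ) (x y t : ℝ) : ℂ := deriv (fun x' => ux u x' y t) x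
/-- Second partial derivative in `y`. -/
noncomputable def uyy (u : ℝ → ℝ → ℝ → ℂ) (x y t : ℝ) : ℂ := deriv (fun y' => uy u x y' t) y

private lemma vti_comp_line_aux {E : Type*} [NormedAddCommGroup E] [NormedSpace ℝ E]
    {G : ℝ × ℝ × ℝ → E} (hG : Differentiable ℝ G) {ℓ : ℝ → ℝ × ℝ × ℝ} {v : ℝ × ℝ × ℝ} {s : ℝ}
    (hℓ : HasDerivAt ℓ v s) : HasDerivAt (fun s' => G (ℓ s')) (fderiv ℝ G (ℓ s) v) s :=
  (hG (ℓ s)).hasFDerivAt.comp_hasDerivAt s hℓ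

private lemma vti_lineX (b c s : ℝ) :
    HasDerivAt (fun s' : ℝ => ((s', b, c) : ℝ × ℝ × ℝ)) ((1, 0, 0) : ℝ × ℝ × ℝ) s :=
  (hasDerivAt_id s).prodMk ((hasDerivAt_const s b).prodMk (hasDerivAt_const s c))

private lemma vti_lineY (a c s : ℝ) :
    HasDerivAt (fun s' : ℝ => ((a, s', c) : ℝ × ℝ × ℝ)) ((0, 1, 0) : ℝ × ℝ × ℝ) s :=
  (hasDerivAt_const s a).prodMk ((hasDerivAt_id s).prodMk (hasDerivAt_const s c))

private lemma vti_lineT (a b s : ℝ) :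
    HasDerivAt (fun s' : ℝ => ((a, b, s') : ℝ × ℝ × ℝ)) ((0, 0, 1) : ℝ × ℝ × ℝ) s :=
  (hasDerivAt_const s a).prodMk ((hasDerivAt_const s b).prodMk (hasDerivAt_id s))

private lemma vti_hasDerivAt_abs_sq {g : ℝ → ℂ} {g' : ℂ} {s : ℝ} (h : HasDerivAt g g' s) :
    HasDerivAt (fun s' => ‖g s'‖ ^ 2)
      ((g' * (starRingEnd ℂ) (g s) + g s * (starRingEnd ℂ) g').re) s := by
  have h1 : HasDerivAt (fun s' => (g s' * (starRingEnd ℂ) (g s')).re)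
      ((g' * (starRingEnd ℂ) (g s) + g s * (starRingEnd ℂ) g').re) s :=
    Complex.reCLM.hasFDerivAt.comp_hasDerivAt s (h.mul h.star)
  have h2 : (fun s' => ‖g s'‖ ^ 2)
      = fun s' => (g s' * (starRingEnd ℂ) (g s')).re := by
    funext s'
    rw [Complex.sq_norm, Complex.mul_conj, Complex.ofReal_re]
  rw [h2]
  exact h1

private lemma vti_hasDerivAt_abs_rpow {p : ℝ} (hp : 3 ≤ p) {g : ℝ → ℂ} {g' : ℂ} {s : ℝ}
    (h : HasDerivAt g g' s) :
    HasDerivAt (fun s' => ‖g s'‖ ^ p)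
      (p / 2 * ‖g s‖ ^ (p - 2)
        * (g' * (starRingEnd ℂ) (g s) + g s * (starRingEnd ℂ) g').re) s := by
  have h1 := vti_hasDerivAt_abs_sq h
  have h2 : HasDerivAt (fun r : ℝ => r ^ (p / 2))
      (p / 2 * (‖g s‖ ^ 2) ^ (p / 2 - 1)) (‖g s‖ ^ 2) :=
    Real.hasDerivAt_rpow_const (Or.inr (by linarith))
  have h3 := h2.comp s h1
  simp only [Function.comp_def] at h3
  have key : ∀ z : ℂ, ∀ q : ℝ, (‖z‖ ^ 2) ^ q = ‖z‖ ^ (2 * q) := by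
    intro z q
    rw [← Real.rpow_natCast (‖z‖) 2, ← Real.rpow_mul (norm_nonneg z)]
    norm_num
  have h4 : (fun s' => (‖g s'‖ ^ 2) ^ (p / 2)) = fun s' => ‖g s'‖ ^ p := by
    funext s'
    rw [key]
    ring_nf
  rw [h4] at h3
  have h5 : (‖g s‖ ^ 2) ^ (p / 2 - 1) = ‖g s‖ ^ (p - 2) := by
    rw [key]
    ring_nf
  rw [h5] at h3
  exact h3

theorem virial_type_identity
    (u : ℝ → ℝ → ℝ → ℂ) (lam p : ℝ) (hp : 3 ≤ p)
    (hu : ContDiff ℝ (⊤ : ℕ∞) (fun q : ℝ × ℝ × ℝ => u q.1 q.2.1 q.2.2))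
    (heq : ∀ x y t : ℝ,
      Complex.I * ut u x y t + uxx u x y t + uyy u x y t
        + (lam : ℂ) * ((‖u x y t‖ ^ (p - 2) : ℝ) : ℂ) * u x y t = 0) :
    ∀ x y t : ℝ,
      ((deriv (fun y' =>
          (y' - 1/2) * (‖uy u x y' t‖ ^ 2 - ‖ux u x y' t‖ ^ 2)) y
            : ℝ) : ℂ)
        = ((2 * ‖uy u x y t‖ ^ 2 : ℝ) : ℂ)
          - 2 * ((deriv (fun x' =>
              (((y : ℝ) - 1/2 : ℝ) * (uy u x' y t * (starRingEnd ℂ) (ux u x' y t)).re)) x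
                : ℝ) : ℂ)
          - Complex.I * deriv (fun t' =>
              (((y : ℝ) - 1/2 : ℝ) : ℂ) * u x y t' * (starRingEnd ℂ) (uy u x y t')) t
          + Complex.I * deriv (fun y' =>
              (((y' : ℝ) - 1/2 : ℝ) : ℂ) * (starRingEnd ℂ) (ut u x y' t) * u x y' t) y
          - deriv (fun x' => u x' y t * (starRingEnd ℂ) (ux u x' y t)) x
          - deriv (fun y' => u x y' t * (starRingEnd ℂ) (uy u x y' t)) y
          - ((lam * (1 - 2/p) * ‖u x y t‖ ^ p : ℝ) : ℂ)
          - (((2 * lam / p) *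
              deriv (fun y' => (y' - 1/2) * ‖u x y' t‖ ^ p) y : ℝ) : ℂ) := by
  intro x y t
  have hp0 : p ≠ 0 := by positivity
  set F : ℝ × ℝ × ℝ → ℂ := fun q => u q.1 q.2.1 q.2.2 with hFdef
  have hFd : Differentiable ℝ F := hu.differentiable (by simp)
  have hF' : ContDiff ℝ (⊤ : ℕ∞) (fderiv ℝ F) := hu.fderiv_right (by simp)
  have hF'd : Differentiable ℝ (fderiv ℝ F) := hF'.differentiable (by simp)
  -- second-derivative helper
  have key2 : ∀ (v : ℝ × ℝ × ℝ) {ℓ : ℝ → ℝ × ℝ × ℝ} {w : ℝ × ℝ × ℝ} {s : ℝ},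
      HasDerivAt ℓ w s →
      HasDerivAt (fun s' => fderiv ℝ F (ℓ s') v) (fderiv ℝ (fderiv ℝ F) (ℓ s) w v) s := by
    intro v ℓ w s hℓ
    have h1 : HasFDerivAt (fun q => fderiv ℝ F q v)
        ((ContinuousLinearMap.apply ℝ ℂ v).comp (fderiv ℝ (fderiv ℝ F) (ℓ s))) (ℓ s) :=
      (ContinuousLinearMap.apply ℝ ℂ v).hasFDerivAt.comp (ℓ s) (hF'd (ℓ s)).hasFDerivAt
    exact h1.comp_hasDerivAt s hℓ
  have hsymm : ∀ v w : ℝ × ℝ × ℝ, fderiv ℝ (fderiv ℝ F) (x, y, t) v w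
      = fderiv ℝ (fderiv ℝ F) (x, y, t) w v :=
    second_derivative_symmetric (fun q => (hFd q).hasFDerivAt) ((hF'd (x, y, t)).hasFDerivAt)
  set f2 := fderiv ℝ (fderiv ℝ F) (x, y, t) with hf2def
  -- first partial derivatives, as HasDerivAt (with deriv-letters as values)
  have hU_x : HasDerivAt (fun x' => u x' y t) (ux u x y t) x :=
    (vti_comp_line_aux hFd (vti_lineX y t x)).differentiableAt.hasDerivAt
  have hU_y : HasDerivAt (fun y' => u x y' t) (uy u x y t) y :=
    (vti_comp_line_aux hFd (vti_lineY x t y)).differentiableAt.hasDerivAt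
  have hU_t : HasDerivAt (fun t' => u x y t') (ut u x y t) t :=
    (vti_comp_line_aux hFd (vti_lineT x y t)).differentiableAt.hasDerivAt
  -- ux, uy, ut are given by directional derivatives of F, at every point
  have hux_eq : ∀ a b c : ℝ, ux u a b c = fderiv ℝ F (a, b, c) (1, 0, 0) :=
    fun a b c => (vti_comp_line_aux hFd (vti_lineX b c a)).deriv
  have huy_eq : ∀ a b c : ℝ, uy u a b c = fderiv ℝ F (a, b, c) (0, 1, 0) :=
    fun a b c => (vti_comp_line_aux hFd (vti_lineY a c b)).deriv
  have hut_eq : ∀ a b c : ℝ, ut u a b c = fderiv ℝ F (a, b, c) (0, 0, 1) :=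
    fun a b c => (vti_comp_line_aux hFd (vti_lineT a b c)).deriv
  -- second partial derivatives
  have hUX_x : HasDerivAt (fun x' => ux u x' y t) (uxx u x y t) x := by
    have h0 : (fun x' => ux u x' y t) = fun x' => fderiv ℝ F (x', y, t) (1, 0, 0) :=
      funext fun x' => hux_eq x' y t
    exact ((h0 ▸ key2 (1, 0, 0) (vti_lineX y t x)).differentiableAt.hasDerivAt :)
  have hUY_y : HasDerivAt (fun y' => uy u x y' t) (uyy u x y t) y := by
    have h0 : (fun y' => uy u x y' t) = fun y' => fderiv ℝ F (x, y', t) (0, 1, 0) :=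
      funext fun y' => huy_eq x y' t
    exact ((h0 ▸ key2 (0, 1, 0) (vti_lineY x t y)).differentiableAt.hasDerivAt :)
  have hUX_y : HasDerivAt (fun y' => ux u x y' t) (f2 (0, 1, 0) (1, 0, 0)) y := by
    have h0 : (fun y' => ux u x y' t) = fun y' => fderiv ℝ F (x, y', t) (1, 0, 0) :=
      funext fun y' => hux_eq x y' t
    exact h0 ▸ key2 (1, 0, 0) (vti_lineY x t y)
  have hUY_x : HasDerivAt (fun x' => uy u x' y t) (f2 (0, 1, 0) (1, 0, 0)) x := by
    have h0 : (fun x' => uy u x' y t) = fun x' => fderiv ℝ F (x', y, t) (0, 1, 0) :=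
      funext fun x' => huy_eq x' y t
    rw [hsymm]
    exact h0 ▸ key2 (0, 1, 0) (vti_lineX y t x)
  have hUY_t : HasDerivAt (fun t' => uy u x y t') (f2 (0, 1, 0) (0, 0, 1)) t := by
    have h0 : (fun t' => uy u x y t') = fun t' => fderiv ℝ F (x, y, t') (0, 1, 0) :=
      funext fun t' => huy_eq x y t'
    rw [hsymm]
    exact h0 ▸ key2 (0, 1, 0) (vti_lineT x y t)
  have hUT_y : HasDerivAt (fun y' => ut u x y' t) (f2 (0, 1, 0) (0, 0, 1)) y := by
    have h0 : (fun y' => ut u x y' t) = fun y' => fderiv ℝ F (x, y', t) (0, 0, 1) :=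
      funext fun y' => hut_eq x y' t
    exact h0 ▸ key2 (0, 0, 1) (vti_lineY x t y)
  -- the six derivatives appearing in the statement
  have g1 : HasDerivAt (fun y' =>
      (y' - 1/2) * (‖uy u x y' t‖ ^ 2 - ‖ux u x y' t‖ ^ 2))
      (1 * (‖uy u x y t‖ ^ 2 - ‖ux u x y t‖ ^ 2)
        + (y - 1/2) *
          ((uyy u x y t * (starRingEnd ℂ) (uy u x y t)
              + uy u x y t * (starRingEnd ℂ) (uyy u x y t)).re
            - (f2 (0, 1, 0) (1, 0, 0) * (starRingEnd ℂ) (ux u x y t)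
              + ux u x y t * (starRingEnd ℂ) (f2 (0, 1, 0) (1, 0, 0))).re)) y :=
    ((hasDerivAt_id y).sub_const (1/2)).mul
      ((vti_hasDerivAt_abs_sq hUY_y).sub (vti_hasDerivAt_abs_sq hUX_y))
  have g2 : HasDerivAt (fun x' =>
      (((y : ℝ) - 1/2 : ℝ) * (uy u x' y t * (starRingEnd ℂ) (ux u x' y t)).re))
      (((y : ℝ) - 1/2 : ℝ) *
        (f2 (0, 1, 0) (1, 0, 0) * (starRingEnd ℂ) (ux u x y t)
          + uy u x y t * (starRingEnd ℂ) (uxx u x y t)).re) x := by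
    have hmul : HasDerivAt (fun x' => uy u x' y t * (starRingEnd ℂ) (ux u x' y t))
        (f2 (0, 1, 0) (1, 0, 0) * (starRingEnd ℂ) (ux u x y t)
          + uy u x y t * (starRingEnd ℂ) (uxx u x y t)) x := hUY_x.mul hUX_x.star
    exact (Complex.reCLM.hasFDerivAt.comp_hasDerivAt x hmul).const_mul _
  have g3 : HasDerivAt (fun t' =>
      (((y : ℝ) - 1/2 : ℝ) : ℂ) * u x y t' * (starRingEnd ℂ) (uy u x y t'))
      ((0 * u x y t + (((y : ℝ) - 1/2 : ℝ) : ℂ) * ut u x y t) * (starRingEnd ℂ) (uy u x y t)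
        + (((y : ℝ) - 1/2 : ℝ) : ℂ) * u x y t
          * (starRingEnd ℂ) (f2 (0, 1, 0) (0, 0, 1))) t :=
    ((hasDerivAt_const t _).mul hU_t).mul hUY_t.star
  have hyc : HasDerivAt (fun y' : ℝ => (((y' : ℝ) - 1/2 : ℝ) : ℂ)) 1 y := by
    have := Complex.ofRealCLM.hasFDerivAt.comp_hasDerivAt y ((hasDerivAt_id y).sub_const (1/2))
    exact this
  have g4 : HasDerivAt (fun y' =>
      (((y' : ℝ) - 1/2 : ℝ) : ℂ) * (starRingEnd ℂ) (ut u x y' t) * u x y' t)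
      ((1 * (starRingEnd ℂ) (ut u x y t)
          + (((y : ℝ) - 1/2 : ℝ) : ℂ) * (starRingEnd ℂ) (f2 (0, 1, 0) (0, 0, 1))) * u x y t
        + (((y : ℝ) - 1/2 : ℝ) : ℂ) * (starRingEnd ℂ) (ut u x y t) * uy u x y t) y :=
    (hyc.mul hUT_y.star).mul hU_y
  have g5 : HasDerivAt (fun x' => u x' y t * (starRingEnd ℂ) (ux u x' y t))
      (ux u x y t * (starRingEnd ℂ) (ux u x y t)
        + u x y t * (starRingEnd ℂ) (uxx u x y t)) x := hU_x.mul hUX_x.star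
  have g6 : HasDerivAt (fun y' => u x y' t * (starRingEnd ℂ) (uy u x y' t))
      (uy u x y t * (starRingEnd ℂ) (uy u x y t)
        + u x y t * (starRingEnd ℂ) (uyy u x y t)) y := hU_y.mul hUY_y.star
  have g7 : HasDerivAt (fun y' => (y' - 1/2) * ‖u x y' t‖ ^ p)
      (1 * ‖u x y t‖ ^ p
        + (y - 1/2) * (p / 2 * ‖u x y t‖ ^ (p - 2)
            * (uy u x y t * (starRingEnd ℂ) (u x y t)
              + u x y t * (starRingEnd ℂ) (uy u x y t)).re)) y :=
    ((hasDerivAt_id y).sub_const (1/2)).mul (vti_hasDerivAt_abs_rpow hp hU_y)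
  rw [g1.deriv, g2.deriv, g3.deriv, g4.deriv, g5.deriv, g6.deriv, g7.deriv]
  -- simplify the rpow factor using p ≠ 0
  have hval : (2 * lam / p) * (1 * ‖u x y t‖ ^ p
        + (y - 1/2) * (p / 2 * ‖u x y t‖ ^ (p - 2)
            * (uy u x y t * (starRingEnd ℂ) (u x y t)
              + u x y t * (starRingEnd ℂ) (uy u x y t)).re))
      = 2 * lam / p * ‖u x y t‖ ^ p
        + lam * ((y - 1/2) * (‖u x y t‖ ^ (p - 2)
            * (uy u x y t * (starRingEnd ℂ) (u x y t)
              + u x y t * (starRingEnd ℂ) (uy u x y t)).re)) := by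
    field_simp
  rw [hval]
  have habs2 : ∀ z : ℂ, ‖z‖ ^ 2 = (z * (starRingEnd ℂ) z).re := by
    intro z
    rw [Complex.mul_conj, Complex.ofReal_re, Complex.sq_norm]
  have habsp : ‖u x y t‖ ^ p
      = ‖u x y t‖ ^ (p - 2) * (u x y t * (starRingEnd ℂ) (u x y t)).re := by
    rw [Complex.mul_conj, Complex.ofReal_re, ← Complex.sq_norm,
      ← Real.rpow_natCast (‖u x y t‖) 2,
      ← Real.rpow_add' (norm_nonneg _) (by norm_num; linarith)]
    norm_num
  rw [habsp]
  simp only [habs2]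
  have hre : ∀ z : ℂ, ((z.re : ℝ) : ℂ) = (z + (starRingEnd ℂ) z) / 2 := by
    intro z
    rw [Complex.add_conj]
    push_cast
    ring
  push_cast
  simp only [hre]
  simp only [map_add, map_mul, map_sub, map_div₀, map_one, map_ofNat, Complex.conj_conj,
    Complex.conj_ofReal, Complex.conj_I]
  have hE := heq x y t
  have hcE : (starRingEnd ℂ) (Complex.I * ut u x y t + uxx u x y t + uyy u x y t
      + (lam : ℂ) * ((‖u x y t‖ ^ (p - 2) : ℝ) : ℂ) * u x y t) = 0 := by
    rw [hE, map_zero]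
  simp only [map_add, map_mul, Complex.conj_I, Complex.conj_ofReal] at hcE
  linear_combination (((y : ℂ) - 1/2) * (starRingEnd ℂ) (uy u x y t)) * hE
    + (u x y t + ((y : ℂ) - 1/2) * uy u x y t) * hcE
end

section
/- For every σ ∈ [1/2, 1] there exists a constant C > 0 such that for all real a ≥ 0 and all y ∈ (0,1], the series ∑_{n=1}^∞ n·sin(nπy)/(n² + a²) converges (in the sense that its partial sums converge) and its sum S satisfies |S| ≤ C·y^{σ−1}·(1 + a)^{σ−1}. -/
/-!
Write `c n = n / (n² + a²)` and `P n = ∑_{k ≤ n} sin (k π y)`. Summation by parts turns the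
series into `-∑ (c (n+1) - c n) P n`, which converges absolutely: `|c (n+1) - c n| ≤ 2 / (n + a)²`,
while `|P n| ≤ π min (y n²) y⁻¹`, the first bound termwise and the second from the Dirichlet
kernel together with Jordan's inequality `sin (π y / 2) ≥ y`. Splitting the resulting majorant at
`n ≈ 1 / y` bounds the sum by `12 π / (1 + y a)`, and `(1 + y a)⁻¹ ≤ (y (1 + a)) ^ (σ - 1)`
for `0 ≤ σ ≤ 1`.
-/

open Real Filter Finset Topology

theorem Finset.tendsto_sum_range_smul_of_summable_norm_sub_smul {R E : Type*} [Ring R]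
    [NormedAddCommGroup E] [Module R E] [CompleteSpace E] (f : ℕ → R) (g : ℕ → E)
    (hlim : Tendsto (fun n ↦ f n • ∑ i ∈ range (n + 1), g i) atTop (𝓝 0))
    (hsum : Summable fun n ↦ ‖(f (n + 1) - f n) • ∑ i ∈ range (n + 1), g i‖) :
    Tendsto (fun N ↦ ∑ i ∈ range N, f i • g i) atTop
      (𝓝 (-∑' n, (f (n + 1) - f n) • ∑ i ∈ range (n + 1), g i)) := by
  rw [← tendsto_add_atTop_iff_nat 1, ← zero_sub]
  simp_rw [sum_range_by_parts f g, Nat.add_sub_cancel]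
  exact hlim.sub hsum.of_norm.hasSum.tendsto_sum_nat

theorem two_mul_sin_half_mul_sum_range_sin (θ : ℝ) (K : ℕ) :
    2 * sin (θ / 2) * ∑ i ∈ range K, sin ((i + 1) * θ) = cos (θ / 2) - cos ((K + 1 / 2) * θ) := by
  have hterm (i : ℕ) : 2 * sin (θ / 2) * sin ((i + 1) * θ)
      = cos ((i + 1 / 2) * θ) - cos (((i + 1 : ℕ) + 1 / 2) * θ) := by
    rw [mul_right_comm, two_mul_sin_mul_sin]
    push_cast
    ring_nf
  simp_rw [mul_sum, hterm, sum_range_sub']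
  rw [Nat.cast_zero, zero_add, one_div_mul_eq_div]

theorem abs_sum_range_sin_le_inv_sin_half {θ : ℝ} (hθ : 0 < sin (θ / 2)) (K : ℕ) :
    |∑ i ∈ range K, sin ((i + 1) * θ)| ≤ (sin (θ / 2))⁻¹ := by
  have h := congrArg abs (two_mul_sin_half_mul_sum_range_sin θ K)
  rw [abs_mul, abs_of_pos (by positivity : 0 < 2 * sin (θ / 2))] at h
  have hcos : |cos (θ / 2) - cos ((K + 1 / 2) * θ)| ≤ 2 :=
    (abs_sub _ _).trans (by linarith [abs_cos_le_one (θ / 2), abs_cos_le_one ((K + 1 / 2) * θ)])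
  rw [← one_div, le_div_iff₀ hθ]
  linarith

theorem abs_sum_range_sin_le_sq_mul (θ : ℝ) (K : ℕ) :
    |∑ i ∈ range K, sin ((i + 1) * θ)| ≤ K ^ 2 * |θ| := by
  calc |∑ i ∈ range K, sin ((i + 1) * θ)| ≤ ∑ i ∈ range K, |sin ((i + 1) * θ)| :=
        abs_sum_le_sum_abs _ _
    _ ≤ ∑ _i ∈ range K, K * |θ| := by
        refine sum_le_sum fun i hi ↦ abs_sin_le_abs.trans ?_
        rw [abs_mul, abs_of_nonneg (by positivity)]
        gcongr
        exact_mod_cast mem_range.mp hi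
    _ = K ^ 2 * |θ| := by rw [sum_const, card_range, nsmul_eq_mul]; ring

theorem le_sin_pi_mul_half {y : ℝ} (hy₀ : 0 ≤ y) (hy₁ : y ≤ 1) : y ≤ sin (π * y / 2) := by
  have h := mul_le_sin (x := π * y / 2) (by positivity) (by nlinarith [pi_pos])
  rwa [show 2 / π * (π * y / 2) = y by field_simp] at h

theorem abs_sum_range_sin_pi_mul_le {y : ℝ} (hy₀ : 0 < y) (hy₁ : y ≤ 1) (K : ℕ) :
    |∑ i ∈ range K, sin ((i + 1) * (π * y))| ≤ π * min (y * K ^ 2) y⁻¹ := by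
  rw [mul_min_of_nonneg _ _ pi_pos.le]
  refine le_min ((abs_sum_range_sin_le_sq_mul _ K).trans_eq ?_) ?_
  · rw [abs_of_pos (by positivity)]
    ring
  · have hsin := le_sin_pi_mul_half hy₀.le hy₁
    calc |∑ i ∈ range K, sin ((i + 1) * (π * y))| ≤ (sin (π * y / 2))⁻¹ :=
          abs_sum_range_sin_le_inv_sin_half (hy₀.trans_le hsin) K
      _ ≤ y⁻¹ := inv_anti₀ hy₀ hsin
      _ ≤ π * y⁻¹ := le_mul_of_one_le_left (by positivity) (by linarith [pi_gt_three])

theorem abs_succ_div_sq_add_sq_sub_le {x a : ℝ} (hx : 0 < x) (ha : 0 ≤ a) :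
    |(x + 1) / ((x + 1) ^ 2 + a ^ 2) - x / (x ^ 2 + a ^ 2)| ≤ 2 / (x + a) ^ 2 := by
  have h₀ : 0 < x ^ 2 + a ^ 2 := by positivity
  have h₁ : 0 < (x + 1) ^ 2 + a ^ 2 := by positivity
  have hdiff : (x + 1) / ((x + 1) ^ 2 + a ^ 2) - x / (x ^ 2 + a ^ 2)
      = (a ^ 2 - x * (x + 1)) / (((x + 1) ^ 2 + a ^ 2) * (x ^ 2 + a ^ 2)) := by
    field_simp
    ring
  have hnum : |a ^ 2 - x * (x + 1)| ≤ (x + 1) ^ 2 + a ^ 2 := by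
    rw [abs_le]; constructor <;> nlinarith
  calc |(x + 1) / ((x + 1) ^ 2 + a ^ 2) - x / (x ^ 2 + a ^ 2)|
      ≤ ((x + 1) ^ 2 + a ^ 2) / (((x + 1) ^ 2 + a ^ 2) * (x ^ 2 + a ^ 2)) := by
        rw [hdiff, abs_div, abs_of_pos (mul_pos h₁ h₀)]
        exact div_le_div_of_nonneg_right hnum (by positivity)
    _ = 1 / (x ^ 2 + a ^ 2) := by field_simp
    _ ≤ 2 / (x + a) ^ 2 := by
        rw [div_le_div_iff₀ h₀ (by positivity)]
        nlinarith [sq_nonneg (x - a)]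

theorem sum_range_sq_div_sq_add_le {a y : ℝ} (ha : 0 ≤ a) (hy : 0 ≤ y) (K : ℕ) :
    ∑ n ∈ range K, y * (n + 1) ^ 2 / (n + 1 + a) ^ 2 ≤ y * K * (K / (K + a)) := by
  have hterm : ∀ n ∈ range K, y * (n + 1) ^ 2 / (n + 1 + a) ^ 2 ≤ y * (K / (K + a)) := by
    intro n hn
    have hnK : (n : ℝ) + 1 ≤ K := by exact_mod_cast mem_range.mp hn
    have hratio : (n + 1) / (n + 1 + a) ≤ 1 :=
      div_le_one_of_le₀ (by linarith) (by positivity)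
    have hratio_mono : (n + 1) / (n + 1 + a) ≤ K / (K + a) := by
      rw [div_le_div_iff₀ (by positivity) (by linarith)]
      nlinarith
    calc y * (n + 1) ^ 2 / (n + 1 + a) ^ 2 = y * ((n + 1) / (n + 1 + a)) ^ 2 := by
          rw [mul_div_assoc, div_pow]
      _ ≤ y * ((n + 1) / (n + 1 + a)) := by
          gcongr
          exact pow_le_of_le_one (by positivity) hratio two_ne_zero
      _ ≤ y * (K / (K + a)) := by gcongr
  calc ∑ n ∈ range K, y * (n + 1) ^ 2 / (n + 1 + a) ^ 2 ≤ ∑ _n ∈ range K, y * (K / (K + a)) :=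
        sum_le_sum hterm
    _ = y * K * (K / (K + a)) := by rw [sum_const, card_range, nsmul_eq_mul]; ring

theorem sum_range_inv_sq_add_le {b : ℝ} (hb : 0 < b) (N : ℕ) :
    ∑ n ∈ range N, 1 / (b + n + 1) ^ 2 ≤ 1 / b := by
  have hterm (n : ℕ) : 1 / (b + n + 1) ^ 2 ≤ 1 / (b + n) - 1 / (b + (n + 1 : ℕ)) := by
    push_cast
    rw [div_sub_div _ _ (by positivity) (by positivity),
      div_le_div_iff₀ (by positivity) (by positivity)]
    nlinarith
  calc ∑ n ∈ range N, 1 / (b + n + 1) ^ 2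
      ≤ ∑ n ∈ range N, (1 / (b + n) - 1 / (b + (n + 1 : ℕ))) := sum_le_sum fun n _ ↦ hterm n
    _ = 1 / b - 1 / (b + N) := by rw [sum_range_sub']; simp
    _ ≤ 1 / b := sub_le_self _ (by positivity)

theorem sum_range_min_div_sq_le {a y : ℝ} (ha : 0 ≤ a) (hy₀ : 0 < y) (hy₁ : y ≤ 1) (N : ℕ) :
    ∑ n ∈ range N, min (y * (n + 1) ^ 2) y⁻¹ / (n + 1 + a) ^ 2 ≤ 6 / (1 + y * a) := by
  set h : ℕ → ℝ := fun n ↦ min (y * (n + 1) ^ 2) y⁻¹ / (n + 1 + a) ^ 2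
  -- split the sum at `K ≈ 1 / y`, where the two arguments of the minimum cross
  set K : ℕ := ⌈y⁻¹⌉₊
  have hK : y⁻¹ ≤ K := Nat.le_ceil _
  have hyK : y * K ≤ 2 := by
    have := Nat.ceil_lt_add_one (inv_nonneg.mpr hy₀.le)
    have : 1 ≤ y⁻¹ := one_le_inv_iff₀.mpr ⟨hy₀, hy₁⟩
    rw [← le_div_iff₀' hy₀, div_eq_mul_inv]
    linarith
  have hKa : 0 < (K : ℝ) + a := by linarith [inv_pos.mpr hy₀]
  have hhead : ∑ n ∈ range K, h n ≤ y * K * (K / (K + a)) :=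
    (sum_le_sum fun n _ ↦ div_le_div_of_nonneg_right (min_le_left _ _) (sq_nonneg _)).trans
      (sum_range_sq_div_sq_add_le ha hy₀.le K)
  have htail : ∑ n ∈ range N, h (K + n) ≤ y⁻¹ * (1 / (K + a)) := by
    calc ∑ n ∈ range N, h (K + n) ≤ ∑ n ∈ range N, y⁻¹ * (1 / ((K + a) + n + 1) ^ 2) := by
          refine sum_le_sum fun n _ ↦ ?_
          have hshift : ((K + n : ℕ) : ℝ) + 1 + a = K + a + n + 1 := by push_cast; ring
          rw [← div_eq_mul_one_div]
          simp only [h, hshift]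
          exact div_le_div_of_nonneg_right (min_le_right _ _) (sq_nonneg _)
      _ ≤ y⁻¹ * (1 / (K + a)) := by
          rw [← mul_sum]
          exact mul_le_mul_of_nonneg_left (sum_range_inv_sq_add_le hKa N) (by positivity)
  have hratio : (K : ℝ) / (K + a) ≤ 2 / (1 + y * a) := by
    rw [div_le_div_iff₀ hKa (by positivity)]
    nlinarith
  calc ∑ n ∈ range N, h n ≤ ∑ n ∈ range (K + N), h n :=
        sum_le_sum_of_subset_of_nonneg (range_mono (by omega)) fun n _ _ ↦ by positivity
    _ = ∑ n ∈ range K, h n + ∑ n ∈ range N, h (K + n) := sum_range_add h K N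
    _ ≤ y * K * (K / (K + a)) + y⁻¹ * (1 / (K + a)) := add_le_add hhead htail
    _ ≤ 3 * (K / (K + a)) := by
        rw [mul_one_div]
        have : y⁻¹ / (K + a) ≤ K / (K + a) := by gcongr
        nlinarith [div_nonneg (Nat.cast_nonneg K : (0 : ℝ) ≤ K) hKa.le]
    _ ≤ 3 * (2 / (1 + y * a)) := by gcongr
    _ = 6 / (1 + y * a) := by ring

theorem exists_tendsto_sum_range_mul_sin_and_abs_le {a y : ℝ} (ha : 0 ≤ a) (hy₀ : 0 < y)
    (hy₁ : y ≤ 1) :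
    ∃ S, Tendsto (fun N : ℕ ↦ ∑ n ∈ range N,
        (n + 1) / ((n + 1) ^ 2 + a ^ 2) * sin ((n + 1) * (π * y))) atTop (𝓝 S) ∧
      |S| ≤ 12 * π / (1 + y * a) := by
  set c : ℕ → ℝ := fun n ↦ (n + 1) / ((n + 1) ^ 2 + a ^ 2)
  set G : ℕ → ℝ := fun n ↦ ∑ i ∈ range n, sin ((i + 1) * (π * y))
  set h : ℕ → ℝ := fun n ↦ min (y * (n + 1) ^ 2) y⁻¹ / (n + 1 + a) ^ 2
  have hG := abs_sum_range_sin_pi_mul_le hy₀ hy₁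
  have hterm (n : ℕ) : ‖(c (n + 1) - c n) • G (n + 1)‖ ≤ 2 * π * h n := by
    have hc := abs_succ_div_sq_add_sq_sub_le (x := n + 1) (by positivity) ha
    rw [smul_eq_mul, norm_mul, Real.norm_eq_abs, Real.norm_eq_abs]
    calc |c (n + 1) - c n| * |G (n + 1)|
        ≤ 2 / (n + 1 + a) ^ 2 * (π * min (y * (n + 1) ^ 2) y⁻¹) := by
          refine mul_le_mul ?_ ?_ (abs_nonneg _) (by positivity)
          · simpa [c, add_right_comm _ (1 : ℝ) a] using hc
          · simpa [G] using hG (n + 1)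
      _ = 2 * π * h n := by ring
  have hmaj := sum_range_min_div_sq_le ha hy₀ hy₁
  have h_summable : Summable h := summable_of_sum_range_le (fun n ↦ by positivity) hmaj
  have hsum : Summable fun n ↦ ‖(c (n + 1) - c n) • G (n + 1)‖ :=
    (h_summable.mul_left (2 * π)).of_nonneg_of_le (fun _ ↦ norm_nonneg _) hterm
  have hlim : Tendsto (fun n ↦ c n • G (n + 1)) atTop (𝓝 0) := by
    have hc (n : ℕ) : |c n| ≤ ((n : ℝ) + 1)⁻¹ := by
      rw [abs_of_nonneg (by positivity), ← one_div,
        div_le_div_iff₀ (by positivity) (by positivity)]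
      nlinarith [sq_nonneg a]
    refine squeeze_zero_norm (fun n ↦ ?_)
      (by simpa using (tendsto_one_div_add_atTop_nhds_zero_nat (𝕜 := ℝ)).const_mul (π * y⁻¹))
    rw [smul_eq_mul, norm_mul, Real.norm_eq_abs, Real.norm_eq_abs, mul_comm]
    exact mul_le_mul ((hG _).trans (by gcongr; exact min_le_right _ _)) (hc n) (abs_nonneg _)
      (by positivity)
  refine ⟨_, tendsto_sum_range_smul_of_summable_norm_sub_smul c _ hlim hsum, ?_⟩
  calc |-∑' n, (c (n + 1) - c n) • G (n + 1)| ≤ ∑' n, ‖(c (n + 1) - c n) • G (n + 1)‖ := by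
        rw [abs_neg, ← Real.norm_eq_abs]
        exact norm_tsum_le_tsum_norm hsum
    _ ≤ ∑' n, 2 * π * h n := hsum.tsum_le_tsum hterm (h_summable.mul_left _)
    _ ≤ 2 * π * (6 / (1 + y * a)) := by
        rw [tsum_mul_left]
        gcongr
        exact Real.tsum_le_of_sum_range_le (fun n ↦ by positivity) hmaj
    _ = 12 * π / (1 + y * a) := by ring

theorem inv_one_add_mul_le_rpow_mul_rpow {y a σ : ℝ} (hy₀ : 0 < y) (hy₁ : y ≤ 1) (ha : 0 ≤ a)
    (hσ₀ : 0 ≤ σ) (hσ₁ : σ ≤ 1) : (1 + y * a)⁻¹ ≤ y ^ (σ - 1) * (1 + a) ^ (σ - 1) := by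
  calc (1 + y * a)⁻¹ = (1 + y * a) ^ (-1 : ℝ) := (rpow_neg_one _).symm
    _ ≤ (1 + y * a) ^ (σ - 1) := rpow_le_rpow_of_exponent_le (by nlinarith) (by linarith)
    _ ≤ (y * (1 + a)) ^ (σ - 1) :=
        rpow_le_rpow_of_nonpos (by positivity) (by nlinarith) (by linarith)
    _ = y ^ (σ - 1) * (1 + a) ^ (σ - 1) := mul_rpow hy₀.le (by positivity)

theorem sin_series_uniform_bound (σ : ℝ) (hσ : σ ∈ Set.Icc (1/2 : ℝ) 1) :
    ∃ C : ℝ, 0 < C ∧ ∀ a : ℝ, 0 ≤ a → ∀ y : ℝ, 0 < y → y ≤ 1 →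
      ∃ S : ℝ,
        Tendsto (fun N : ℕ => ∑ n ∈ Finset.Icc 1 N,
            (n : ℝ) * Real.sin (n * π * y) / ((n : ℝ) ^ 2 + a ^ 2)) atTop (nhds S)
        ∧ |S| ≤ C * y ^ (σ - 1) * (1 + a) ^ (σ - 1) := by
  obtain ⟨hσ₀, hσ₁⟩ := hσ
  refine ⟨12 * π, by positivity, fun a ha y hy₀ hy₁ ↦ ?_⟩
  obtain ⟨S, hS, hSle⟩ := exists_tendsto_sum_range_mul_sin_and_abs_le ha hy₀ hy₁
  refine ⟨S, hS.congr fun N ↦ ?_, ?_⟩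
  · rw [← Ico_add_one_right_eq_Icc, sum_Ico_eq_sum_range, Nat.add_sub_cancel]
    refine sum_congr rfl fun n _ ↦ ?_
    push_cast
    ring_nf
  · calc |S| ≤ 12 * π * (1 + y * a)⁻¹ := hSle.trans_eq (div_eq_mul_inv _ _)
      _ ≤ 12 * π * (y ^ (σ - 1) * (1 + a) ^ (σ - 1)) := by
          gcongr
          exact inv_one_add_mul_le_rpow_mul_rpow hy₀ hy₁ ha (by linarith) hσ₁
      _ = 12 * π * y ^ (σ - 1) * (1 + a) ^ (σ - 1) := by ring
end

section
/- Let ψ : ℝ → ℝ satisfy ψ(x) = 0 whenever |x| ≥ 2. Then for every μ > 0 and every y ∈ (0,1), the series ∑_{n=1}^∞ n·sin(nπy)·(1 − ψ(n² + μ))/(n² + μ) converges (in the sense that its partial sums converge) and its sum equals (π/2)·sinh(π√μ·(1 − y))/sinh(π√μ) − sin(πy)·ψ(1 + μ)/(1 + μ). -/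
/-!
Only the term `n = 1` feels `ψ`, since `n² + μ ≥ 4` for `n ≥ 2`. Writing
`n / (n² + μ) = 1 / n - μ / (n (n² + μ))`, the remaining series is the sawtooth series
`∑ sin (n x) / n = (π - x) / 2` on `(0, 2π)` (the imaginary part of `-log (1 - e^{ix})`, reached
by Abel's limit theorem) minus `μ T x`, where `T x = ∑ sin (n x) / (n (n² + μ))` converges
absolutely. Differentiating termwise and comparing with `∑ cos (n x) / n² = π²/6 - π x/2 + x²/4`
gives `T'' = μ T + (x - π) / 2` on `(0, 2π)`, so `U = (π - x) / 2 - μ T` solves `U'' = μ U` with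
`U 0 = π / 2` and `U (2π) = -π / 2`. This boundary value problem has the unique solution
`(π / 2) sinh (√μ (π - x)) / sinh (√μ π)`; take `x = π y`.
-/

open Real Filter
open Topology Finset Set

namespace Complex

lemma norm_geom_sum_le {z : ℂ} (hz : ‖z‖ ≤ 1) (hz1 : z ≠ 1) (n : ℕ) :
    ‖∑ i ∈ range n, z ^ i‖ ≤ 2 / ‖1 - z‖ := by
  have h0 : 0 < ‖1 - z‖ := norm_pos_iff.mpr (sub_ne_zero.mpr hz1.symm)
  rw [le_div_iff₀ h0, ← norm_mul, geom_sum_mul_neg]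
  calc ‖1 - z ^ n‖ ≤ ‖(1 : ℂ)‖ + ‖z ^ n‖ := norm_sub_le _ _
    _ ≤ 2 := by rw [norm_one, norm_pow]; linarith [pow_le_one₀ (norm_nonneg z) hz (n := n)]

/-- Dirichlet's test, with the bounded partial sums of the geometric series. -/
lemma exists_tendsto_sum_range_pow_div {z : ℂ} (hz : ‖z‖ ≤ 1) (hz1 : z ≠ 1) :
    ∃ L, Tendsto (fun N ↦ ∑ n ∈ range N, z ^ n / n) atTop (𝓝 L) := by
  obtain ⟨L, hL⟩ := cauchySeq_tendsto_of_complete <|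
    Antitone.cauchySeq_series_mul_of_tendsto_zero_of_bounded
      (fun m n hmn ↦ one_div_le_one_div_of_le (by positivity) (by gcongr))
      tendsto_one_div_add_atTop_nhds_zero_nat (norm_geom_sum_le hz hz1)
  refine ⟨z * L, (tendsto_add_atTop_iff_nat 1).mp ((hL.const_mul z).congr fun N ↦ ?_)⟩
  simp only [sum_range_succ', Finset.mul_sum, CharP.cast_eq_zero, div_zero, add_zero]
  refine sum_congr rfl fun i _ ↦ ?_
  rw [real_smul]
  push_cast
  ring

lemma one_sub_mem_slitPlane {z : ℂ} (hz : ‖z‖ ≤ 1) (hz1 : z ≠ 1) : 1 - z ∈ slitPlane := by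
  rw [mem_slitPlane_iff, sub_re, one_re, sub_im, one_im]
  by_cases him : z.im = 0
  · have hre : z.re ≠ 1 := fun h ↦ hz1 (ext h him)
    exact Or.inl (sub_pos.mpr (lt_of_le_of_ne ((re_le_norm z).trans hz) hre))
  · exact Or.inr (by simpa using him)

/-- By Abel's limit theorem the sum is the radial limit of `-log (1 - z r)`. -/
theorem tendsto_sum_range_pow_div {z : ℂ} (hz : ‖z‖ ≤ 1) (hz1 : z ≠ 1) :
    Tendsto (fun N ↦ ∑ n ∈ range N, z ^ n / n) atTop (𝓝 (-log (1 - z))) := by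
  obtain ⟨L, hL⟩ := exists_tendsto_sum_range_pow_div hz hz1
  have habel := tendsto_tsum_powerSeries_nhdsWithin_lt hL
  have hlog : Tendsto (fun w : ℂ ↦ -log (1 - z * w)) ((𝓝[<] 1).map ofReal)
      (𝓝 (-log (1 - z))) := by
    have hcont : ContinuousAt (fun w : ℂ ↦ -log (1 - z * w)) 1 :=
      ((continuousAt_clog (by simpa using one_sub_mem_slitPlane hz hz1)).comp
        (by fun_prop)).neg
    have h := hcont.tendsto
    rw [mul_one] at h
    refine h.mono_left ?_
    exact (continuous_ofReal.tendsto' 1 1 ofReal_one).mono_left nhdsWithin_le_nhds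
  have heq : ∀ᶠ w in (𝓝[<] 1).map ofReal, -log (1 - z * w) = ∑' n : ℕ, z ^ n / n * w ^ n := by
    rw [eventually_map]
    filter_upwards [Ioo_mem_nhdsLT (show (0 : ℝ) < 1 by norm_num)] with r hr
    have hzr : ‖z * r‖ < 1 := by
      rw [norm_mul, norm_real, Real.norm_of_nonneg hr.1.le]
      nlinarith [hr.1, hr.2, norm_nonneg z]
    refine ((hasSum_taylorSeries_neg_log hzr).tsum_eq.symm.trans (tsum_congr fun n ↦ ?_))
    ring
  rw [tendsto_nhds_unique habel (hlog.congr' heq)] at hL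
  exact hL

lemma one_sub_exp_ofReal_mul_I (x : ℝ) :
    1 - exp (x * I) =
      (2 * Real.sin (x / 2) : ℝ) * exp (((x - π) / 2 : ℝ) * I) := by
  have hsum : x / 2 + (x - π) / 2 = x - π / 2 := by ring
  have hdiff : x / 2 - (x - π) / 2 = π / 2 := by ring
  apply ext <;>
    simp only [sub_re, sub_im, one_re, one_im, mul_re,
      mul_im, ofReal_re, ofReal_im, exp_ofReal_mul_I_re,
      exp_ofReal_mul_I_im, zero_mul, sub_zero, add_zero, zero_sub]
  · rw [Real.two_mul_sin_mul_cos, hsum, hdiff, Real.sin_pi_div_two, Real.sin_sub_pi_div_two]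
    ring
  · rw [Real.two_mul_sin_mul_sin, hsum, hdiff, Real.cos_pi_div_two, Real.cos_sub_pi_div_two]
    ring

end Complex

namespace Real

theorem tendsto_sum_range_sin_mul_div {x : ℝ} (hx0 : 0 < x) (hx2 : x < 2 * π) :
    Tendsto (fun N ↦ ∑ n ∈ range N, sin (n * x) / n) atTop (𝓝 ((π - x) / 2)) := by
  set z := Complex.exp (x * Complex.I)
  have hsin : 0 < 2 * sin (x / 2) :=
    mul_pos two_pos (sin_pos_of_pos_of_lt_pi (by linarith) (by linarith))
  have hz1 : z ≠ 1 := by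
    rw [ne_comm, ← sub_ne_zero, Complex.one_sub_exp_ofReal_mul_I]
    exact mul_ne_zero (by exact_mod_cast hsin.ne') (Complex.exp_ne_zero _)
  have harg : (1 - z).arg = (x - π) / 2 := by
    rw [Complex.one_sub_exp_ofReal_mul_I, Complex.arg_real_mul _ hsin, Complex.arg_exp_mul_I,
      toIocMod_eq_self]
    constructor <;> linarith
  have him := (Complex.continuous_im.tendsto _).comp
    (Complex.tendsto_sum_range_pow_div (Complex.norm_exp_ofReal_mul_I x).le hz1)
  rw [Function.comp_def, Complex.neg_im, Complex.log_im, harg] at him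
  convert him using 2 with N
  · rw [Complex.im_sum]
    refine sum_congr rfl fun n _ ↦ ?_
    rw [← Complex.exp_nat_mul, Complex.div_natCast_im, ← mul_assoc]
    exact_mod_cast congrArg (· / (n : ℝ)) (Complex.exp_ofReal_mul_I_im (n * x)).symm
  · ring

end Real

lemma eq_of_hasDerivAt_zero_of_mem_Icc {u : ℝ → ℝ} {p q : ℝ} (hu : ContinuousOn u (Icc p q))
    (hu' : ∀ t ∈ Ioo p q, HasDerivAt u 0 t) {t : ℝ} (ht : t ∈ Icc p q) : u t = u p := by
  rcases ht.1.eq_or_lt with rfl | hpt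
  · rfl
  obtain ⟨c, -, hc⟩ := exists_hasDerivAt_eq_slope u (fun _ ↦ 0) hpt
    (hu.mono (Icc_subset_Icc_right ht.2)) fun s hs ↦ hu' s ⟨hs.1, hs.2.trans_le ht.2⟩
  rw [eq_comm, div_eq_zero_iff, sub_eq_zero] at hc
  exact hc.resolve_right (sub_ne_zero.mpr hpt.ne')

/-- `(f' + b f) e^{-b t}` is a first integral of `f'' = a² f` whenever `b² = a²`. -/
theorem eq_zero_of_hasDerivAt_sq_mul {f f' : ℝ → ℝ} {a p q : ℝ} (ha : a ≠ 0) (hpq : p < q)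
    (hf : ContinuousOn f (Icc p q)) (hf' : ContinuousOn f' (Icc p q))
    (hff' : ∀ t ∈ Ioo p q, HasDerivAt f (f' t) t)
    (hf'f : ∀ t ∈ Ioo p q, HasDerivAt f' (a ^ 2 * f t) t)
    (hp : f p = 0) (hq : f q = 0) {t : ℝ} (ht : t ∈ Icc p q) : f t = 0 := by
  have hint : ∀ b, b ^ 2 = a ^ 2 → ∀ s ∈ Icc p q,
      (f' s + b * f s) * exp (-(b * s)) = f' p * exp (-(b * p)) := by
    intro b hb s hs
    refine (eq_of_hasDerivAt_zero_of_mem_Icc (u := fun s ↦ (f' s + b * f s) * exp (-(b * s)))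
      (by fun_prop) (fun s hs ↦ ?_) hs).trans (by rw [hp, mul_zero, add_zero])
    have hexp : HasDerivAt (fun s ↦ exp (-(b * s))) (exp (-(b * s)) * -b) s :=
      ((hasDerivAt_id s).const_mul b).neg.exp.congr_deriv (by simp)
    refine (((hf'f s hs).add ((hff' s hs).const_mul b)).mul hexp).congr_deriv ?_
    rw [← hb, Pi.add_apply]
    ring
  have hsq : (-a) ^ 2 = a ^ 2 := neg_sq a
  have hf'p : f' p = 0 := by
    have h₁ := hint a rfl q ⟨hpq.le, le_rfl⟩
    have h₂ := hint (-a) hsq q ⟨hpq.le, le_rfl⟩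
    rw [hq, mul_zero, add_zero, exp_neg, exp_neg, ← div_eq_mul_inv, ← div_eq_mul_inv,
      div_eq_div_iff (exp_ne_zero _) (exp_ne_zero _)] at h₁
    rw [hq, mul_zero, add_zero, neg_mul, neg_mul, neg_neg, neg_neg] at h₂
    have hne : exp (a * q) ^ 2 - exp (a * p) ^ 2 ≠ 0 := by
      rw [sub_ne_zero, Ne, pow_left_inj₀ (exp_nonneg _) (exp_nonneg _) two_ne_zero, exp_eq_exp]
      exact (mul_right_injective₀ ha).ne hpq.ne'
    have : f' p * (exp (a * q) ^ 2 - exp (a * p) ^ 2) = 0 := by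
      linear_combination exp (a * p) * h₂ - exp (a * q) * h₁
    simpa [hne] using this
  have h₁ := hint a rfl t ht
  have h₂ := hint (-a) hsq t ht
  rw [hf'p, zero_mul, mul_eq_zero, or_iff_left (exp_ne_zero _)] at h₁ h₂
  have : 2 * a * f t = 0 := by linarith
  simpa [ha] using this

-- Indexed from `n = 0`; the coefficients used below all vanish there, as `(0 : ℝ)⁻¹ = 0`.
noncomputable def sinSeries (c : ℕ → ℝ) (t : ℝ) : ℝ := ∑' n : ℕ, c n * sin (n * t)

noncomputable def cosSeries (c : ℕ → ℝ) (t : ℝ) : ℝ := ∑' n : ℕ, c n * cos (n * t)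

section TrigSeries

variable {c : ℕ → ℝ}

lemma summable_of_summable_natCast_mul_abs (hc : Summable fun n : ℕ ↦ n * |c n|) :
    Summable c := by
  refine (summable_nat_add_iff 1).mp (.of_norm_bounded ((summable_nat_add_iff 1).mpr hc) ?_)
  intro n
  rw [norm_eq_abs, Nat.cast_add_one]
  exact le_mul_of_one_le_left (abs_nonneg _) (by linarith [n.cast_nonneg (α := ℝ)])

lemma summable_mul_sin (hc : Summable fun n ↦ |c n|) (t : ℝ) :
    Summable fun n : ℕ ↦ c n * sin (n * t) :=
  .of_norm_bounded hc fun n ↦ by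
    rw [norm_mul, norm_eq_abs, norm_eq_abs]
    exact mul_le_of_le_one_right (abs_nonneg _) (abs_sin_le_one _)

lemma summable_mul_cos (hc : Summable fun n ↦ |c n|) (t : ℝ) :
    Summable fun n : ℕ ↦ c n * cos (n * t) :=
  .of_norm_bounded hc fun n ↦ by
    rw [norm_mul, norm_eq_abs, norm_eq_abs]
    exact mul_le_of_le_one_right (abs_nonneg _) (abs_cos_le_one _)

lemma continuous_cosSeries (hc : Summable fun n ↦ |c n|) : Continuous (cosSeries c) :=
  continuous_tsum (fun n ↦ by fun_prop) hc fun n t ↦ by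
    rw [norm_mul, norm_eq_abs, norm_eq_abs]
    exact mul_le_of_le_one_right (abs_nonneg _) (abs_cos_le_one _)

lemma cosSeries_sub_const_mul {d : ℕ → ℝ} (hc : Summable fun n ↦ |c n|)
    (hd : Summable fun n ↦ |d n|) (k t : ℝ) :
    cosSeries (fun n ↦ c n - k * d n) t = cosSeries c t - k * cosSeries d t := by
  rw [cosSeries, cosSeries, cosSeries, ← tsum_mul_left,
    ← (summable_mul_cos hc t).tsum_sub ((summable_mul_cos hd t).mul_left k)]
  exact tsum_congr fun n ↦ by ring

lemma hasDerivAt_sinSeries (hc : Summable fun n : ℕ ↦ n * |c n|) (t : ℝ) :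
    HasDerivAt (sinSeries c) (cosSeries (fun n ↦ n * c n) t) t := by
  refine hasDerivAt_tsum (g := fun n s ↦ c n * sin (n * s))
    (g' := fun n s ↦ n * c n * cos (n * s)) hc (fun n s ↦ ?_) (fun n s ↦ ?_) (y₀ := 0) ?_ t
  · exact (((hasDerivAt_id' s).const_mul (n : ℝ)).sin.const_mul (c n)).congr_deriv (by ring)
  · rw [norm_mul, norm_eq_abs, norm_eq_abs, abs_mul, Nat.abs_cast]
    exact mul_le_of_le_one_right (by positivity) (abs_cos_le_one _)
  · simp

lemma hasDerivAt_cosSeries (hc : Summable fun n : ℕ ↦ n * |c n|) (t : ℝ) :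
    HasDerivAt (cosSeries c) (-sinSeries (fun n ↦ n * c n) t) t := by
  rw [sinSeries, ← tsum_neg]
  refine hasDerivAt_tsum (g' := fun n s ↦ -(n * c n * sin (n * s))) hc (fun n s ↦ ?_)
    (fun n s ↦ ?_) (y₀ := 0) ?_ t
  · exact (((hasDerivAt_id' s).const_mul (n : ℝ)).cos.const_mul (c n)).congr_deriv (by ring)
  · rw [norm_neg, norm_mul, norm_eq_abs, norm_eq_abs, abs_mul, Nat.abs_cast]
    exact mul_le_of_le_one_right (by positivity) (abs_sin_le_one _)
  · simpa using summable_of_summable_natCast_mul_abs hc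

lemma sinSeries_zero (c : ℕ → ℝ) : sinSeries c 0 = 0 := by
  simp [sinSeries]

lemma sinSeries_two_pi (c : ℕ → ℝ) : sinSeries c (2 * π) = 0 := by
  have h (n : ℕ) : sin (n * (2 * π)) = 0 := sin_eq_zero_iff.mpr ⟨2 * n, by push_cast; ring⟩
  simp [sinSeries, h]

end TrigSeries

lemma cosSeries_inv_sq {t : ℝ} (ht : t ∈ Icc 0 (2 * π)) :
    cosSeries (fun n ↦ ((n : ℝ) ^ 2)⁻¹) t = π ^ 2 / 6 - π * t / 2 + t ^ 2 / 4 := by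
  have hx : t / (2 * π) ∈ Icc (0 : ℝ) 1 :=
    ⟨div_nonneg ht.1 (by positivity), div_le_one_of_le₀ ht.2 (by positivity)⟩
  have h := (hasSum_one_div_nat_pow_mul_cos one_ne_zero hx).tsum_eq
  have hB : (Polynomial.map (algebraMap ℚ ℝ) (Polynomial.bernoulli 2)).eval (t / (2 * π)) =
      (t / (2 * π)) ^ 2 - t / (2 * π) + 6⁻¹ :=
    bernoulliFun_two _
  simp only [mul_one, hB] at h
  rw [cosSeries]
  convert h using 1
  · refine tsum_congr fun n ↦ ?_
    rw [one_div, show 2 * π * n * (t / (2 * π)) = n * t by field_simp]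
  · field_simp
    norm_num [Nat.factorial]
    ring

lemma hasDerivAt_cosSeries_inv_sq {t : ℝ} (ht : t ∈ Ioo 0 (2 * π)) :
    HasDerivAt (cosSeries fun n ↦ ((n : ℝ) ^ 2)⁻¹) ((t - π) / 2) t := by
  have hpoly : HasDerivAt (fun s ↦ π ^ 2 / 6 - π * s / 2 + s ^ 2 / 4) ((t - π) / 2) t :=
    ((((hasDerivAt_id' t).const_mul π).div_const 2).const_sub _ |>.add
      ((hasDerivAt_pow 2 t).div_const 4)).congr_deriv (by ring)
  refine hpoly.congr_of_eventuallyEq ?_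
  filter_upwards [isOpen_Ioo.mem_nhds ht] with s hs
  exact cosSeries_inv_sq (Ioo_subset_Icc_self hs)

section Coefficients

variable {μ : ℝ}

lemma summable_natCast_mul_abs_inv_mul (hμ : 0 ≤ μ) :
    Summable fun n : ℕ ↦ (n : ℝ) * |((n : ℝ) * (n ^ 2 + μ))⁻¹| := by
  refine .of_nonneg_of_le (fun _ ↦ by positivity) (fun n ↦ ?_)
    (summable_nat_pow_inv.mpr one_lt_two)
  rcases n.eq_zero_or_pos with rfl | hn
  · simp
  have hn : (0 : ℝ) < n := by exact_mod_cast hn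
  rw [abs_of_pos (by positivity), ← div_eq_mul_inv, div_le_iff₀ (by positivity)]
  field_simp
  nlinarith

lemma summable_natCast_mul_abs_inv_sq_mul (hμ : 0 ≤ μ) :
    Summable fun n : ℕ ↦ (n : ℝ) * |((n : ℝ) ^ 2 * (n ^ 2 + μ))⁻¹| := by
  refine .of_nonneg_of_le (fun _ ↦ by positivity) (fun n ↦ ?_)
    (summable_nat_pow_inv.mpr one_lt_two)
  rcases n.eq_zero_or_pos with rfl | hn
  · simp
  have hn : (1 : ℝ) ≤ n := by exact_mod_cast hn
  rw [abs_of_pos (by positivity), ← div_eq_mul_inv, div_le_iff₀ (by positivity)]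
  field_simp
  nlinarith

/-- Splitting `1 / (n² + μ) = 1 / n² - μ / (n² (n² + μ))` reduces this to the closed form of
`∑ cos (n t) / n²`. -/
lemma hasDerivAt_cosSeries_natCast_mul_inv_mul (hμ : 0 ≤ μ) {t : ℝ} (ht : t ∈ Ioo 0 (2 * π)) :
    HasDerivAt (cosSeries fun n ↦ n * ((n : ℝ) * (n ^ 2 + μ))⁻¹)
      ((t - π) / 2 + μ * sinSeries (fun n ↦ ((n : ℝ) * (n ^ 2 + μ))⁻¹) t) t := by
  have hcoeff : (fun n : ℕ ↦ n * ((n : ℝ) * (n ^ 2 + μ))⁻¹) =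
      fun n : ℕ ↦ ((n : ℝ) ^ 2)⁻¹ - μ * ((n : ℝ) ^ 2 * (n ^ 2 + μ))⁻¹ := by
    funext n
    rcases eq_or_ne (n : ℝ) 0 with hn | hn
    · simp [hn]
    · have : (n : ℝ) ^ 2 + μ ≠ 0 := by positivity
      field_simp
      ring
  have hd := summable_natCast_mul_abs_inv_sq_mul hμ
  have hsplit : cosSeries (fun n : ℕ ↦ n * ((n : ℝ) * (n ^ 2 + μ))⁻¹) =
      fun s ↦ cosSeries (fun n ↦ ((n : ℝ) ^ 2)⁻¹) s -
        μ * cosSeries (fun n ↦ ((n : ℝ) ^ 2 * (n ^ 2 + μ))⁻¹) s := by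
    funext s
    rw [hcoeff]
    exact cosSeries_sub_const_mul (summable_nat_pow_inv.mpr one_lt_two).abs
      (summable_of_summable_natCast_mul_abs hd).abs μ s
  have hHd : (fun n : ℕ ↦ n * ((n : ℝ) ^ 2 * (n ^ 2 + μ))⁻¹) =
      fun n : ℕ ↦ ((n : ℝ) * (n ^ 2 + μ))⁻¹ := by
    funext n
    rcases eq_or_ne (n : ℝ) 0 with hn | hn
    · simp [hn]
    · field_simp
  rw [hsplit]
  have := (hasDerivAt_cosSeries_inv_sq ht).sub ((hasDerivAt_cosSeries hd t).const_mul μ)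
  rw [hHd] at this
  exact this.congr_deriv (by ring)

end Coefficients

theorem sub_mul_sinSeries_eq_sinh_div {μ t : ℝ} (hμ : 0 < μ) (ht : t ∈ Icc 0 (2 * π)) :
    (π - t) / 2 - μ * sinSeries (fun n ↦ ((n : ℝ) * (n ^ 2 + μ))⁻¹) t =
      π / 2 * sinh (√μ * (π - t)) / sinh (√μ * π) := by
  set c := fun n : ℕ ↦ ((n : ℝ) * (n ^ 2 + μ))⁻¹
  set a := √μ
  have ha : 0 < a := sqrt_pos.mpr hμ
  have ha2 : a ^ 2 = μ := sq_sqrt hμ.le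
  have hsinh : sinh (a * π) ≠ 0 := (sinh_pos_iff.mpr (by positivity)).ne'
  have hc := summable_natCast_mul_abs_inv_mul hμ.le
  have hreflect (s : ℝ) : HasDerivAt (fun s ↦ a * (π - s)) (-a) s :=
    (((hasDerivAt_id' s).const_sub π).const_mul a).congr_deriv (by ring)
  have hW : ∀ s ∈ Ioo 0 (2 * π), HasDerivAt
      (fun s ↦ (π - s) / 2 - μ * sinSeries c s - π / 2 * sinh (a * (π - s)) / sinh (a * π))
      (-1 / 2 - μ * cosSeries (fun n ↦ n * c n) s +
        π / 2 * a * cosh (a * (π - s)) / sinh (a * π)) s := fun s _ ↦ by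
    have hT' : HasDerivAt (sinSeries c) (cosSeries (fun n ↦ n * c n) s) s :=
      hasDerivAt_sinSeries hc s
    exact ((((hasDerivAt_id' s).const_sub π).div_const 2).sub (hT'.const_mul μ)
      |>.sub (((hreflect s).sinh.const_mul (π / 2)).div_const _)).congr_deriv (by ring)
  have hW' : ∀ s ∈ Ioo 0 (2 * π), HasDerivAt
      (fun s ↦ -1 / 2 - μ * cosSeries (fun n ↦ n * c n) s +
        π / 2 * a * cosh (a * (π - s)) / sinh (a * π))
      (a ^ 2 * ((π - s) / 2 - μ * sinSeries c s - π / 2 * sinh (a * (π - s)) / sinh (a * π))) s :=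
    fun s hs ↦ by
      have hT'' : HasDerivAt (cosSeries fun n ↦ n * c n) ((s - π) / 2 + μ * sinSeries c s) s :=
        hasDerivAt_cosSeries_natCast_mul_inv_mul hμ.le hs
      refine ((hT''.const_mul μ).const_sub _ |>.add
        (((hreflect s).cosh.const_mul (π / 2 * a)).div_const _)).congr_deriv ?_
      rw [← ha2]
      ring
  have hcont : Continuous (sinSeries c) :=
    continuous_iff_continuousAt.mpr fun s ↦ (hasDerivAt_sinSeries hc s).continuousAt
  have hcont' : Continuous (cosSeries fun n ↦ n * c n) :=
    continuous_cosSeries (by simpa only [abs_mul, Nat.abs_cast] using hc)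
  have h0 := eq_zero_of_hasDerivAt_sq_mul ha.ne' two_pi_pos (by fun_prop) (by fun_prop) hW hW'
    ?_ ?_ ht
  · rw [← sub_eq_zero]
    exact h0
  · rw [sinSeries_zero, sub_zero, mul_div_assoc, div_self hsinh]
    ring
  · rw [sinSeries_two_pi, show a * (π - 2 * π) = -(a * π) by ring, sinh_neg, mul_neg, neg_div,
      mul_div_assoc, div_self hsinh]
    ring

lemma sum_Icc_one_eq_sum_range_succ {M : Type*} [AddCommMonoid M] {f : ℕ → M} (hf : f 0 = 0)
    (N : ℕ) : ∑ n ∈ Icc 1 N, f n = ∑ n ∈ range (N + 1), f n := by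
  rw [range_eq_Ico, sum_eq_sum_Ico_succ_bot N.succ_pos, hf, zero_add, Nat.succ_eq_add_one,
    Finset.Ico_add_one_right_eq_Icc]

lemma sum_Icc_one_mul_one_sub {R : Type*} [CommRing R] {g h : ℕ → R}
    (hh : ∀ n, 2 ≤ n → h n = 0) {N : ℕ} (hN : 1 ≤ N) :
    ∑ n ∈ Icc 1 N, g n * (1 - h n) = ∑ n ∈ Icc 1 N, g n - g 1 * h 1 := by
  simp_rw [mul_one_sub, sum_sub_distrib]
  refine congrArg _ (sum_eq_single_of_mem 1 (mem_Icc.mpr ⟨le_rfl, hN⟩) fun n hn hn1 ↦ ?_)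
  rw [hh n (by have := (mem_Icc.mp hn).1; omega), mul_zero]

theorem tendsto_sum_range_natCast_mul_sin_div {μ x : ℝ} (hμ : 0 < μ) (hx : x ∈ Ioo 0 (2 * π)) :
    Tendsto (fun N ↦ ∑ n ∈ range N, (n : ℝ) * sin (n * x) / (n ^ 2 + μ)) atTop
      (𝓝 (π / 2 * sinh (√μ * (π - x)) / sinh (√μ * π))) := by
  have hc := summable_of_summable_natCast_mul_abs (summable_natCast_mul_abs_inv_mul hμ.le)
  rw [← sub_mul_sinSeries_eq_sinh_div hμ (Ioo_subset_Icc_self hx)]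
  refine ((tendsto_sum_range_sin_mul_div hx.1 hx.2).sub
    (((summable_mul_sin hc.abs x).hasSum.tendsto_sum_nat).const_mul μ)).congr fun N ↦ ?_
  rw [Finset.mul_sum, ← sum_sub_distrib]
  refine sum_congr rfl fun n _ ↦ ?_
  rcases eq_or_ne (n : ℝ) 0 with hn | hn
  · simp [hn]
  · have : (n : ℝ) ^ 2 + μ ≠ 0 := by positivity
    field_simp
    ring

theorem cutoff_sin_series_identity (ψ : ℝ → ℝ) (hψ : ∀ x : ℝ, 2 ≤ |x| → ψ x = 0)
    (μ : ℝ) (hμ : 0 < μ) (y : ℝ) (hy0 : 0 < y) (hy1 : y < 1) :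
    Tendsto (fun N : ℕ => ∑ n ∈ Finset.Icc 1 N,
        (n : ℝ) * Real.sin (n * π * y) * (1 - ψ ((n : ℝ) ^ 2 + μ)) / ((n : ℝ) ^ 2 + μ)) atTop
      (nhds ((π / 2) * Real.sinh (π * Real.sqrt μ * (1 - y)) / Real.sinh (π * Real.sqrt μ)
        - Real.sin (π * y) * ψ (1 + μ) / (1 + μ))) := by
  have hS := tendsto_sum_range_natCast_mul_sin_div hμ
    (x := π * y) ⟨by positivity, by nlinarith [pi_pos]⟩
  rw [show √μ * (π - π * y) = π * √μ * (1 - y) by ring, mul_comm √μ π] at hS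
  have hψ2 (n : ℕ) (hn : 2 ≤ n) : ψ ((n : ℝ) ^ 2 + μ) = 0 := hψ _ <| by
    have : (2 : ℝ) ≤ n := by exact_mod_cast hn
    rw [abs_of_pos (by positivity)]
    nlinarith
  refine (((tendsto_add_atTop_iff_nat 1).mpr hS).sub_const _).congr' ?_
  filter_upwards [eventually_ge_atTop 1] with N hN
  rw [← sum_Icc_one_eq_sum_range_succ (by simp)]
  convert (sum_Icc_one_mul_one_sub (g := fun n : ℕ ↦ (n : ℝ) * sin (n * (π * y)) / (n ^ 2 + μ))
    (h := fun n : ℕ ↦ ψ ((n : ℝ) ^ 2 + μ)) hψ2 hN).symm using 1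
  · simp only [Nat.cast_one, one_pow, one_mul]
    ring
  · exact sum_congr rfl fun n _ ↦ by rw [mul_assoc (n : ℝ) π y]; ring
end

section
/- For every real γ > 1/4, the quantity ∑_{n=1}^∞ ∫_0^∞ n² / ( (1+λ)^{2γ} · (n² + λ)² ) dλ is finite. -/
/-!
Splitting the exponent `2 = a + (2 - a)` and using `n² ≤ n² + λ`, `1 + λ ≤ n² + λ` gives
`(n² + λ)² ≥ n^{2a} (1 + λ)^{2 - a}`, so the summand is at most `n^{2-2a} (1 + λ)^{a-2γ-2}`:
the double sum/integral factors into a `p`-series times a one-dimensional integral.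
Both converge when `3/2 < a < 2γ + 1`, and such an `a ≤ 2` exists exactly when `γ > 1/4`.
-/

open MeasureTheory Real Set

lemma Real.rpow_mul_rpow_le_rpow_add {x y z a b : ℝ} (hx : 0 ≤ x) (hxz : x ≤ z) (hy : 0 ≤ y)
    (hyz : y ≤ z) (ha : 0 ≤ a) (hb : 0 ≤ b) : x ^ a * y ^ b ≤ z ^ (a + b) := by
  rcases (add_nonneg ha hb).eq_or_lt with hab | hab
  · obtain ⟨rfl, rfl⟩ : a = 0 ∧ b = 0 := ⟨by linarith, by linarith⟩
    simp
  rw [rpow_add' (hx.trans hxz) hab.ne']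
  exact mul_le_mul (rpow_le_rpow hx hxz ha) (rpow_le_rpow hy hyz hb) (rpow_nonneg hy b)
    (rpow_nonneg (hx.trans hxz) a)

lemma sq_div_rpow_mul_sq_le_rpow_mul_rpow {N l γ a : ℝ} (hN : 1 ≤ N) (hl : 0 ≤ l) (ha₀ : 0 ≤ a)
    (ha₂ : a ≤ 2) :
    N ^ 2 / ((1 + l) ^ (2 * γ) * (N ^ 2 + l) ^ 2) ≤
      N ^ (2 - 2 * a) * (1 + l) ^ (a - 2 * γ - 2) := by
  have hN₀ : 0 < N := one_pos.trans_le hN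
  have hl₁ : 0 < 1 + l := by linarith
  have hsq : N ^ (2 * a) * (1 + l) ^ (2 - a) ≤ (N ^ 2 + l) ^ 2 := by
    have h := rpow_mul_rpow_le_rpow_add (z := N ^ 2 + l) (sq_nonneg N) (by linarith) hl₁.le
      (by nlinarith) ha₀ (by linarith : 0 ≤ 2 - a)
    rw [add_sub_cancel, rpow_two, ← rpow_natCast, ← rpow_mul hN₀.le] at h
    exact_mod_cast h
  have hexp : a - 2 * γ - 2 + 2 * γ + (2 - a) = 0 := by ring
  rw [div_le_iff₀ (by positivity)]
  calc N ^ 2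
      = N ^ (2 - 2 * a) * N ^ (2 * a) *
          ((1 + l) ^ (a - 2 * γ - 2) * (1 + l) ^ (2 * γ) * (1 + l) ^ (2 - a)) := by
        rw [← rpow_add hN₀, ← rpow_add hl₁, ← rpow_add hl₁, sub_add_cancel, hexp, rpow_zero,
          mul_one, rpow_two]
    _ = N ^ (2 - 2 * a) * (1 + l) ^ (a - 2 * γ - 2) *
          ((1 + l) ^ (2 * γ) * (N ^ (2 * a) * (1 + l) ^ (2 - a))) := by ring
    _ ≤ N ^ (2 - 2 * a) * (1 + l) ^ (a - 2 * γ - 2) * ((1 + l) ^ (2 * γ) * (N ^ 2 + l) ^ 2) := by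
        gcongr

lemma setLIntegral_Ioi_one_add_rpow_lt_top {q : ℝ} (hq : q < -1) :
    ∫⁻ l in Ioi (0 : ℝ), ENNReal.ofReal ((1 + l) ^ q) < ⊤ := by
  calc ∫⁻ l in Ioi (0 : ℝ), ENNReal.ofReal ((1 + l) ^ q)
      = ∫⁻ l in Ioi (0 : ℝ), ENNReal.ofReal ((1 + ‖l‖) ^ (-(-q))) :=
        setLIntegral_congr_fun measurableSet_Ioi fun l hl ↦ by
          rw [norm_of_nonneg (le_of_lt hl), neg_neg]
    _ ≤ ∫⁻ l, ENNReal.ofReal ((1 + ‖l‖) ^ (-(-q))) := setLIntegral_le_lintegral _ _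
    _ < ⊤ := finite_integral_one_add_norm (by rw [Module.finrank_self, Nat.cast_one]; linarith)

lemma tsum_pnat_ofReal_rpow_lt_top {p : ℝ} (hp : p < -1) :
    ∑' n : ℕ+, ENNReal.ofReal ((n : ℝ) ^ p) < ⊤ := by
  have hsum : Summable fun n : ℕ+ ↦ ((n : ℕ) : ℝ) ^ p :=
    (summable_nat_rpow.2 hp).comp_injective PNat.coe_injective
  rw [← ENNReal.ofReal_tsum_of_nonneg (fun n ↦ by positivity) hsum]
  exact ENNReal.ofReal_lt_top

theorem sum_integral_finite (γ : ℝ) (hγ : 1/4 < γ) :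
    (∑' n : ℕ+, ∫⁻ l in Set.Ioi (0 : ℝ),
        ENNReal.ofReal ((n : ℝ) ^ 2 / ((1 + l) ^ (2 * γ) * ((n : ℝ) ^ 2 + l) ^ 2)))
      < ⊤ := by
  set a := min 2 (γ + 5 / 4)
  have ha₂ : a ≤ 2 := min_le_left _ _
  have ha₁ : 3 / 2 < a := lt_min (by norm_num) (by linarith)
  have haγ : a < 2 * γ + 1 := (min_le_right _ _).trans_lt (by linarith)
  calc (∑' n : ℕ+, ∫⁻ l in Set.Ioi (0 : ℝ),
        ENNReal.ofReal ((n : ℝ) ^ 2 / ((1 + l) ^ (2 * γ) * ((n : ℝ) ^ 2 + l) ^ 2)))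
      ≤ ∑' n : ℕ+, ∫⁻ l in Ioi (0 : ℝ),
          ENNReal.ofReal ((n : ℝ) ^ (2 - 2 * a)) * ENNReal.ofReal ((1 + l) ^ (a - 2 * γ - 2)) :=
        ENNReal.tsum_le_tsum fun n ↦ setLIntegral_mono' measurableSet_Ioi fun l hl ↦ by
          rw [← ENNReal.ofReal_mul (by positivity)]
          exact ENNReal.ofReal_le_ofReal <| sq_div_rpow_mul_sq_le_rpow_mul_rpow
            (Nat.one_le_cast.2 n.pos) (le_of_lt hl) (by linarith) ha₂
    _ = (∑' n : ℕ+, ENNReal.ofReal ((n : ℝ) ^ (2 - 2 * a))) *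
          ∫⁻ l in Ioi (0 : ℝ), ENNReal.ofReal ((1 + l) ^ (a - 2 * γ - 2)) := by
        simp_rw [lintegral_const_mul' _ _ ENNReal.ofReal_ne_top, ENNReal.tsum_mul_right]
    _ < ⊤ := ENNReal.mul_lt_top (tsum_pnat_ofReal_rpow_lt_top (by linarith))
        (setLIntegral_Ioi_one_add_rpow_lt_top (by linarith))
end

section
/- Let g : ℝ × ℝ → ℂ be measurable and suppose that ∫_ℝ |ξ| ( ∫_0^{ξ²} |g(ξ,λ)|² dλ ) dξ is finite. Then ∫_ℝ ∑_{n=1}^∞ | n·∫_0^{ξ²} g(ξ,λ)/(ξ² + n² − λ) dλ |² dξ ≤ π · ∫_ℝ |ξ| ( ∫_0^{ξ²} |g(ξ,λ)|² dλ ) dξ. In particular the left-hand side is finite. -/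
open MeasureTheory Real
open scoped ENNReal

/-!
For fixed `ξ`, Cauchy–Schwarz in `λ` bounds the `n`-th term by
`n² ∫₀^{ξ²} (ξ² + n² - λ)⁻² dλ · ∫₀^{ξ²} |g|² = ξ² / (ξ² + n²) · ∫₀^{ξ²} |g|²`,
and `∑_{n ≥ 1} ξ² / (ξ² + n²) ≤ |ξ| ∫₀^∞ |ξ| / (ξ² + x²) dx = π |ξ| / 2`, the comparison
with the integral being made term by term through the mean value theorem for `arctan`.
So the estimate already holds for the integrands, pointwise in `ξ`.
-/

theorem ENNReal.sq_lintegral_mul_le {α : Type*} [MeasurableSpace α] {μ : Measure α}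
    {f g : α → ℝ≥0∞} (hf : AEMeasurable f μ) (hg : AEMeasurable g μ) :
    (∫⁻ a, f a * g a ∂μ) ^ 2 ≤ (∫⁻ a, f a ^ 2 ∂μ) * ∫⁻ a, g a ^ 2 ∂μ := by
  have h := ENNReal.lintegral_mul_le_Lp_mul_Lq μ Real.HolderConjugate.two_two hf hg
  simp only [Pi.mul_apply, ENNReal.rpow_two] at h
  calc (∫⁻ a, f a * g a ∂μ) ^ 2
      ≤ ((∫⁻ a, f a ^ 2 ∂μ) ^ (1 / 2 : ℝ) * (∫⁻ a, g a ^ 2 ∂μ) ^ (1 / 2 : ℝ)) ^ 2 := by gcongr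
    _ = (∫⁻ a, f a ^ 2 ∂μ) * ∫⁻ a, g a ^ 2 ∂μ := by
      rw [mul_pow, ← ENNReal.rpow_two, ← ENNReal.rpow_two, ← ENNReal.rpow_mul,
        ← ENNReal.rpow_mul]
      norm_num

theorem sq_enorm_integral_mul_le {α 𝕜 : Type*} [MeasurableSpace α] {μ : Measure α} [RCLike 𝕜]
    {f g : α → 𝕜} (hf : AEStronglyMeasurable f μ) (hg : AEStronglyMeasurable g μ) :
    ‖∫ a, f a * g a ∂μ‖ₑ ^ 2 ≤ (∫⁻ a, ‖f a‖ₑ ^ 2 ∂μ) * ∫⁻ a, ‖g a‖ₑ ^ 2 ∂μ := by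
  calc ‖∫ a, f a * g a ∂μ‖ₑ ^ 2 ≤ (∫⁻ a, ‖f a‖ₑ * ‖g a‖ₑ ∂μ) ^ 2 := by
        gcongr
        simpa only [enorm_mul] using enorm_integral_le_lintegral_enorm (fun a => f a * g a)
    _ ≤ _ := ENNReal.sq_lintegral_mul_le hf.enorm hg.enorm

theorem Real.sub_div_one_add_sq_le_arctan_sub {a b : ℝ} (ha : 0 ≤ a) (hab : a ≤ b) :
    (b - a) / (1 + b ^ 2) ≤ arctan b - arctan a := by
  rcases hab.eq_or_lt with rfl | hlt
  · simp
  obtain ⟨c, ⟨hac, hcb⟩, hc⟩ := exists_hasDerivAt_eq_slope arctan (fun x => 1 / (1 + x ^ 2)) hlt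
    continuous_arctan.continuousOn (fun x _ => hasDerivAt_arctan x)
  have hderiv_le : 1 / (1 + b ^ 2) ≤ (arctan b - arctan a) / (b - a) := by
    rw [← hc]
    gcongr
    linarith
  calc (b - a) / (1 + b ^ 2) = (b - a) * (1 / (1 + b ^ 2)) := by ring
    _ ≤ (b - a) * ((arctan b - arctan a) / (b - a)) :=
      mul_le_mul_of_nonneg_left hderiv_le (sub_nonneg.2 hab)
    _ = arctan b - arctan a := by field_simp

theorem ENNReal.tsum_ofReal_le_of_le_sub {a F : ℕ → ℝ} {M : ℝ} (ha : ∀ k, 0 ≤ a k)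
    (haF : ∀ k, a k ≤ F (k + 1) - F k) (hF : ∀ N, F N - F 0 ≤ M) :
    ∑' k, ENNReal.ofReal (a k) ≤ ENNReal.ofReal M := by
  rw [ENNReal.tsum_eq_iSup_nat]
  refine iSup_le fun N => ?_
  calc ∑ k ∈ Finset.range N, ENNReal.ofReal (a k)
      = ENNReal.ofReal (∑ k ∈ Finset.range N, a k) :=
        (ENNReal.ofReal_sum_of_nonneg fun k _ => ha k).symm
    _ ≤ ENNReal.ofReal (F N - F 0) := by
        gcongr
        rw [← Finset.sum_range_sub F]
        exact Finset.sum_le_sum fun k _ => haF k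
    _ ≤ ENNReal.ofReal M := ENNReal.ofReal_le_ofReal (hF N)

theorem sq_div_sq_add_succ_sq_le {s : ℝ} (hs : 0 < s) (k : ℕ) :
    s ^ 2 / (s ^ 2 + ((k : ℝ) + 1) ^ 2) ≤ s * arctan ((k + 1 : ℕ) / s) - s * arctan (k / s) := by
  push_cast
  have h := sub_div_one_add_sq_le_arctan_sub (by positivity : (0 : ℝ) ≤ k / s)
    (by gcongr; linarith : (k : ℝ) / s ≤ (k + 1) / s)
  have hrw : ((k + 1) / s - k / s) / (1 + ((k + 1) / s) ^ 2)
      = s / (s ^ 2 + ((k : ℝ) + 1) ^ 2) := by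
    field_simp
    ring
  rw [hrw] at h
  calc s ^ 2 / (s ^ 2 + ((k : ℝ) + 1) ^ 2) = s * (s / (s ^ 2 + ((k : ℝ) + 1) ^ 2)) := by ring
    _ ≤ s * (arctan ((k + 1) / s) - arctan (k / s)) := by gcongr
    _ = _ := by ring

theorem tsum_sq_div_sq_add_sq_le (ξ : ℝ) :
    ∑' n : ℕ+, ENNReal.ofReal (ξ ^ 2 / (ξ ^ 2 + (n : ℝ) ^ 2)) ≤ ENNReal.ofReal (π / 2 * |ξ|) := by
  rcases eq_or_ne ξ 0 with rfl | hξ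
  · simp
  have hs : 0 < |ξ| := abs_pos.2 hξ
  rw [tsum_pnat_eq_tsum_succ (f := fun n : ℕ => ENNReal.ofReal (ξ ^ 2 / (ξ ^ 2 + (n : ℝ) ^ 2)))]
  simp only [Nat.cast_add, Nat.cast_one, ← sq_abs ξ]
  refine ENNReal.tsum_ofReal_le_of_le_sub (F := fun k : ℕ => |ξ| * arctan (k / |ξ|))
    (fun k => by positivity) (sq_div_sq_add_succ_sq_le hs) fun N => ?_
  simp only [Nat.cast_zero, zero_div, arctan_zero, mul_zero, sub_zero]
  nlinarith [arctan_lt_pi_div_two (N / |ξ|)]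

theorem lintegral_Ioo_inv_sub_sq {a b A : ℝ} (hab : a ≤ b) (hbA : b < A) :
    ∫⁻ l in Set.Ioo a b, ENNReal.ofReal ((A - l)⁻¹ ^ 2) =
      ENNReal.ofReal ((A - b)⁻¹ - (A - a)⁻¹) := by
  have hne : ∀ x ∈ Set.Icc a b, A - x ≠ 0 := fun x hx => by linarith [hx.2]
  have hcont : ContinuousOn (fun x : ℝ => (A - x)⁻¹ ^ 2) (Set.Icc a b) :=
    ((continuousOn_const.sub continuousOn_id).inv₀ hne).pow 2
  have hderiv : ∀ x ∈ Set.uIcc a b, HasDerivAt (fun y => (A - y)⁻¹) ((A - x)⁻¹ ^ 2) x := by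
    intro x hx
    rw [Set.uIcc_of_le hab] at hx
    have hsub : HasDerivAt (fun y : ℝ => A - y) (-1) x := (hasDerivAt_id x).const_sub A
    exact (hsub.inv (hne x hx)).congr_deriv (by rw [neg_neg, one_div, inv_pow])
  rw [← ofReal_integral_eq_lintegral_ofReal
    (hcont.integrableOn_Icc.mono_set Set.Ioo_subset_Icc_self)
    (Filter.Eventually.of_forall fun x => sq_nonneg _), ← integral_Ioc_eq_integral_Ioo,
    ← intervalIntegral.integral_of_le hab, intervalIntegral.integral_eq_sub_of_hasDerivAt hderiv
      ((Set.uIcc_of_le hab ▸ hcont).intervalIntegrable)]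

theorem ofReal_sq_norm_mul_integral_resolvent_le {f : ℝ → ℂ} {c m : ℝ}
    (hf : AEStronglyMeasurable f (volume.restrict (Set.Ioo 0 c))) (hc : 0 ≤ c) (hm : m ≠ 0) :
    ENNReal.ofReal (‖(m : ℂ) * ∫ l in Set.Ioo 0 c, f l / ((c + m ^ 2 - l : ℝ) : ℂ)‖ ^ 2)
      ≤ ENNReal.ofReal (c / (c + m ^ 2)) * ∫⁻ l in Set.Ioo 0 c, ENNReal.ofReal (‖f l‖ ^ 2) := by
  have hm2 : 0 < m ^ 2 := by positivity
  have ofReal_sq_norm : ∀ z : ℂ, ENNReal.ofReal (‖z‖ ^ 2) = ‖z‖ₑ ^ 2 := fun z => by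
    rw [ENNReal.ofReal_pow (norm_nonneg z), ofReal_norm]
  have hresolvent : ∫⁻ l in Set.Ioo 0 c, ‖(((c + m ^ 2 - l)⁻¹ : ℝ) : ℂ)‖ₑ ^ 2
      = ENNReal.ofReal ((m ^ 2)⁻¹ - (c + m ^ 2)⁻¹) := by
    simp_rw [← ofReal_sq_norm, Complex.norm_real, Real.norm_eq_abs, sq_abs]
    convert lintegral_Ioo_inv_sub_sq hc (by linarith : c < c + m ^ 2) using 3 <;> ring
  have hinv : AEStronglyMeasurable (fun l : ℝ => (((c + m ^ 2 - l)⁻¹ : ℝ) : ℂ))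
      (volume.restrict (Set.Ioo 0 c)) := by fun_prop
  have hcs := sq_enorm_integral_mul_le hf hinv
  rw [hresolvent] at hcs
  simp only [Complex.ofReal_inv, ← div_eq_mul_inv] at hcs
  calc ENNReal.ofReal (‖(m : ℂ) * ∫ l in Set.Ioo 0 c, f l / ((c + m ^ 2 - l : ℝ) : ℂ)‖ ^ 2)
      = ENNReal.ofReal (m ^ 2) * ‖∫ l in Set.Ioo 0 c, f l / ((c + m ^ 2 - l : ℝ) : ℂ)‖ₑ ^ 2 := by
        rw [ofReal_sq_norm, enorm_mul, mul_pow, ← ofReal_sq_norm, Complex.norm_real,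
          Real.norm_eq_abs, sq_abs]
    _ ≤ ENNReal.ofReal (m ^ 2) * ((∫⁻ l in Set.Ioo 0 c, ‖f l‖ₑ ^ 2) *
          ENNReal.ofReal ((m ^ 2)⁻¹ - (c + m ^ 2)⁻¹)) := by gcongr
    _ = ENNReal.ofReal (c / (c + m ^ 2)) * ∫⁻ l in Set.Ioo 0 c, ENNReal.ofReal (‖f l‖ ^ 2) := by
        simp_rw [ofReal_sq_norm]
        rw [mul_comm (∫⁻ _ in _, _), ← mul_assoc, ← ENNReal.ofReal_mul hm2.le]
        congr 2
        field_simp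
        ring

theorem weighted_resolvent_sum_estimate_general (g : ℝ → ℝ → ℂ)
    (hg : Measurable (fun q : ℝ × ℝ => g q.1 q.2)) :
    (∫⁻ ξ : ℝ, ∑' n : ℕ+, ENNReal.ofReal (‖((n : ℂ) *
        ∫ l in Set.Ioo (0 : ℝ) (ξ ^ 2),
          g ξ l / ((ξ ^ 2 + (n : ℝ) ^ 2 - l : ℝ) : ℂ))‖ ^ 2))
      ≤ ENNReal.ofReal π *
        ∫⁻ ξ : ℝ, ENNReal.ofReal |ξ| *
          ∫⁻ l in Set.Ioo (0 : ℝ) (ξ ^ 2), ENNReal.ofReal (‖g ξ l‖ ^ 2) := by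
  rw [← lintegral_const_mul' _ _ ENNReal.ofReal_ne_top]
  refine lintegral_mono fun ξ => ?_
  set G := ∫⁻ l in Set.Ioo (0 : ℝ) (ξ ^ 2), ENNReal.ofReal (‖g ξ l‖ ^ 2)
  have hgξ : AEStronglyMeasurable (g ξ) (volume.restrict (Set.Ioo 0 (ξ ^ 2))) :=
    (hg.comp measurable_prodMk_left).aestronglyMeasurable
  calc ∑' n : ℕ+, ENNReal.ofReal (‖((n : ℂ) * ∫ l in Set.Ioo (0 : ℝ) (ξ ^ 2),
          g ξ l / ((ξ ^ 2 + (n : ℝ) ^ 2 - l : ℝ) : ℂ))‖ ^ 2)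
      ≤ ∑' n : ℕ+, ENNReal.ofReal (ξ ^ 2 / (ξ ^ 2 + (n : ℝ) ^ 2)) * G := by
        gcongr with n
        have h := ofReal_sq_norm_mul_integral_resolvent_le hgξ (sq_nonneg ξ)
          (Nat.cast_ne_zero.2 n.ne_zero : ((n : ℕ) : ℝ) ≠ 0)
        rwa [Complex.ofReal_natCast] at h
    _ = (∑' n : ℕ+, ENNReal.ofReal (ξ ^ 2 / (ξ ^ 2 + (n : ℝ) ^ 2))) * G := ENNReal.tsum_mul_right
    _ ≤ ENNReal.ofReal (π / 2 * |ξ|) * G := by gcongr; exact tsum_sq_div_sq_add_sq_le ξ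
    _ ≤ ENNReal.ofReal π * (ENNReal.ofReal |ξ| * G) := by
        rw [← mul_assoc, ← ENNReal.ofReal_mul pi_pos.le]
        gcongr
        linarith [pi_pos]

theorem weighted_resolvent_sum_estimate (g : ℝ → ℝ → ℂ)
    (hg : Measurable (fun q : ℝ × ℝ => g q.1 q.2))
    (hfin : (∫⁻ ξ : ℝ, ENNReal.ofReal |ξ| *
        ∫⁻ l in Set.Ioo (0 : ℝ) (ξ ^ 2), ENNReal.ofReal (‖g ξ l‖ ^ 2)) < ⊤) :
    (∫⁻ ξ : ℝ, ∑' n : ℕ+, ENNReal.ofReal (‖((n : ℂ) *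
        ∫ l in Set.Ioo (0 : ℝ) (ξ ^ 2),
          g ξ l / ((ξ ^ 2 + (n : ℝ) ^ 2 - l : ℝ) : ℂ))‖ ^ 2))
      ≤ ENNReal.ofReal π *
        ∫⁻ ξ : ℝ, ENNReal.ofReal |ξ| *
          ∫⁻ l in Set.Ioo (0 : ℝ) (ξ ^ 2), ENNReal.ofReal (‖g ξ l‖ ^ 2) :=
  weighted_resolvent_sum_estimate_general g hg
end

section
/- For every real α with 0 < α < 1/2 there exists a constant C > 0 such that for every measurable function g : (0,∞) → ℂ with ∫_0^∞ ν^{2α+2}|g(ν)|² dν finite, one has ∑_{n=2}^∞ | ∫_0^{n−1} ν·g(ν)/(n − ν) dν |² ≤ C · ∫_0^∞ ν^{2α+2} |g(ν)|² dν. -/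
open MeasureTheory Real
open Set
open scoped ENNReal

/-!
Write the kernel as
`ν / (N - ν) = [ν ^ (α + 1) (N - ν) ^ (-(1 - α) / 2)] · [ν ^ (-α) (N - ν) ^ (-(1 + α) / 2)]`
and apply Cauchy–Schwarz on `(0, N - 1)`. The square of the second factor integrates to
`O(N ^ (-2α))`: split at `N / 2`, using `2α < 1` near `0` and `α > 0` near `N`. Since `N - ν ≤ N`,
that factor turns the weight `(N - ν) ^ (-(1 - α))` of the first one into `(N - ν) ^ (-(1 + α))`.
Summing over `N` by Tonelli, for fixed `ν` the points `N - ν > 1` are spaced by `1`, so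
`∑_N (N - ν) ^ (-(1 + α)) ≤ ∑_k (k + 1) ^ (-(1 + α)) < ∞`.
-/

theorem enorm_integral_sq_le_lintegral_sq_mul {X E : Type*} [MeasurableSpace X]
    [NormedAddCommGroup E] [NormedSpace ℝ E] {μ : Measure X} {F : X → E} {P Q : X → ℝ≥0∞}
    (hP : AEMeasurable P μ) (hQ : AEMeasurable Q μ) (hF : ∀ᵐ x ∂μ, ‖F x‖ₑ ≤ P x * Q x) :
    ‖∫ x, F x ∂μ‖ₑ ^ 2 ≤ (∫⁻ x, P x ^ 2 ∂μ) * ∫⁻ x, Q x ^ 2 ∂μ := by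
  have hPQ : ∫⁻ x, P x * Q x ∂μ
      ≤ (∫⁻ x, P x ^ 2 ∂μ) ^ (1 / 2 : ℝ) * (∫⁻ x, Q x ^ 2 ∂μ) ^ (1 / 2 : ℝ) := by
    have := ENNReal.lintegral_mul_le_Lp_mul_Lq μ Real.HolderConjugate.two_two hP hQ
    simpa only [Pi.mul_apply, ENNReal.rpow_two] using this
  calc ‖∫ x, F x ∂μ‖ₑ ^ 2 ≤ (∫⁻ x, P x * Q x ∂μ) ^ 2 :=
        pow_le_pow_left₀ zero_le
          ((enorm_integral_le_lintegral_enorm F).trans (lintegral_mono_ae hF)) 2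
    _ ≤ ((∫⁻ x, P x ^ 2 ∂μ) ^ (1 / 2 : ℝ) * (∫⁻ x, Q x ^ 2 ∂μ) ^ (1 / 2 : ℝ)) ^ 2 :=
        pow_le_pow_left₀ zero_le hPQ 2
    _ = (∫⁻ x, P x ^ 2 ∂μ) * ∫⁻ x, Q x ^ 2 ∂μ := by
        rw [← ENNReal.mul_rpow_of_nonneg _ _ (by norm_num), ← ENNReal.rpow_natCast,
          ← ENNReal.rpow_mul]
        norm_num

theorem lintegral_Ioo_zero_rpow_neg {a c : ℝ} (ha : a < 1) (hc : 0 ≤ c) :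
    ∫⁻ ν in Ioo 0 c, ENNReal.ofReal (ν ^ (-a)) = ENNReal.ofReal (c ^ (1 - a) / (1 - a)) := by
  have hint : IntervalIntegrable (fun ν : ℝ => ν ^ (-a)) volume 0 c :=
    intervalIntegral.intervalIntegrable_rpow' (by linarith)
  rw [← ofReal_integral_eq_lintegral_ofReal (hint.1.mono_set Ioo_subset_Ioc_self)
      ((ae_restrict_mem measurableSet_Ioo).mono fun ν hν => rpow_nonneg hν.1.le _),
    integral_Ioc_eq_integral_Ioo.symm, ← intervalIntegral.integral_of_le hc,
    integral_rpow (Or.inl (by linarith)), zero_rpow (by linarith), sub_zero, neg_add_eq_sub]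

theorem lintegral_Iio_sub_rpow_neg {b : ℝ} (hb : 1 < b) (N : ℝ) :
    ∫⁻ ν in Iio (N - 1), ENNReal.ofReal ((N - ν) ^ (-b)) = ENNReal.ofReal (1 / (b - 1)) := by
  have hshift : ∀ ν, (Iio (N - 1)).indicator (fun ν => ENNReal.ofReal ((N - ν) ^ (-b))) ν
      = (Ioi 1).indicator (fun u => ENNReal.ofReal (u ^ (-b))) (N - ν) := by
    intro ν
    rcases lt_or_ge ν (N - 1) with hν | hν
    · rw [indicator_of_mem (mem_Iio.2 hν), indicator_of_mem (mem_Ioi.2 (by linarith))]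
    · rw [indicator_of_notMem (notMem_Iio.2 hν), indicator_of_notMem (notMem_Ioi.2 (by linarith))]
  rw [← lintegral_indicator measurableSet_Iio, funext hshift,
    lintegral_sub_left_eq_self ((Ioi 1).indicator fun u => ENNReal.ofReal (u ^ (-b))) N,
    lintegral_indicator measurableSet_Ioi,
    ← ofReal_integral_eq_lintegral_ofReal (integrableOn_Ioi_rpow_of_lt (by linarith) one_pos)
      ((ae_restrict_mem measurableSet_Ioi).mono fun u hu => rpow_nonneg (by linarith [hu.out]) _),
    integral_Ioi_rpow_of_lt (by linarith) one_pos, one_rpow, neg_div, ← div_neg, neg_add_eq_sub,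
    neg_sub]

theorem lintegral_Ioo_rpow_neg_mul_sub_rpow_neg_le {a b N : ℝ} (ha₀ : 0 ≤ a) (ha₁ : a < 1)
    (hb : 1 < b) (hN : 2 ≤ N) :
    ∫⁻ ν in Ioo 0 (N - 1), ENNReal.ofReal (ν ^ (-a) * (N - ν) ^ (-b))
      ≤ ENNReal.ofReal (2 ^ a * (1 / (1 - a) + 1 / (b - 1)) * N ^ (-a)) := by
  have hN₂ : 1 ≤ N / 2 := by linarith
  have near_zero : ∫⁻ ν in Ioo 0 (N / 2), ENNReal.ofReal (ν ^ (-a) * (N - ν) ^ (-b))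
      ≤ ENNReal.ofReal ((N / 2) ^ (-a) * (1 / (1 - a))) :=
    calc _ ≤ ∫⁻ ν in Ioo 0 (N / 2),
            ENNReal.ofReal (ν ^ (-a)) * ENNReal.ofReal ((N / 2) ^ (-b)) := by
          refine setLIntegral_mono (by fun_prop) fun ν hν => ?_
          rw [← ENNReal.ofReal_mul (rpow_nonneg hν.1.le _)]
          refine ENNReal.ofReal_le_ofReal (mul_le_mul_of_nonneg_left ?_ (rpow_nonneg hν.1.le _))
          exact rpow_le_rpow_of_nonpos (by linarith) (by linarith [hν.2]) (by linarith)
      _ = ENNReal.ofReal ((N / 2) ^ (-b) * (N / 2) ^ (1 - a) * (1 / (1 - a))) := by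
          rw [lintegral_mul_const _ (by fun_prop), lintegral_Ioo_zero_rpow_neg ha₁ (by linarith),
            ← ENNReal.ofReal_mul (by positivity)]
          ring_nf
      _ ≤ _ := by
          rw [← rpow_add (by linarith)]
          gcongr
          linarith
  have near_N : ∫⁻ ν in Ico (N / 2) (N - 1), ENNReal.ofReal (ν ^ (-a) * (N - ν) ^ (-b))
      ≤ ENNReal.ofReal ((N / 2) ^ (-a) * (1 / (b - 1))) :=
    calc _ ≤ ∫⁻ ν in Ico (N / 2) (N - 1),
            ENNReal.ofReal ((N / 2) ^ (-a)) * ENNReal.ofReal ((N - ν) ^ (-b)) := by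
          refine setLIntegral_mono (by fun_prop) fun ν hν => ?_
          rw [← ENNReal.ofReal_mul (by positivity)]
          refine ENNReal.ofReal_le_ofReal
            (mul_le_mul_of_nonneg_right ?_ (rpow_nonneg (by linarith [hν.2]) _))
          exact rpow_le_rpow_of_nonpos (by linarith) hν.1 (by linarith)
      _ ≤ ∫⁻ ν in Iio (N - 1),
            ENNReal.ofReal ((N / 2) ^ (-a)) * ENNReal.ofReal ((N - ν) ^ (-b)) :=
          lintegral_mono_set Ico_subset_Iio_self
      _ = _ := by
          rw [lintegral_const_mul _ (by fun_prop), lintegral_Iio_sub_rpow_neg hb,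
            ← ENNReal.ofReal_mul (by positivity)]
  have hhalf : (N / 2) ^ (-a) = 2 ^ a * N ^ (-a) := by
    rw [div_rpow (by linarith) zero_le_two, rpow_neg zero_le_two, div_inv_eq_mul, mul_comm]
  calc _ ≤ ∫⁻ ν in Ioo 0 (N / 2) ∪ Ico (N / 2) (N - 1),
          ENNReal.ofReal (ν ^ (-a) * (N - ν) ^ (-b)) :=
        lintegral_mono_set (Ioo_union_Ico_eq_Ioo (by linarith) (by linarith)).ge
    _ ≤ _ := lintegral_union_le _ _ _
    _ ≤ _ := add_le_add near_zero near_N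
    _ = _ := by
        rw [← ENNReal.ofReal_add (by positivity) (by positivity), hhalf]
        ring_nf

theorem mul_div_eq_rpow_mul_rpow {x y : ℝ} (hx : 0 < x) (hy : 0 < y) (α t : ℝ) :
    x * t / y = (x ^ (α + 1) * t * y ^ (-(1 - α) / 2)) * (x ^ (-α) * y ^ (-(1 + α) / 2)) := by
  calc x * t / y
      = (x ^ (α + 1) * x ^ (-α)) * t * (y ^ (-(1 - α) / 2) * y ^ (-(1 + α) / 2)) := by
        rw [← rpow_add hx, ← rpow_add hy, show α + 1 + -α = 1 by ring,
          show -(1 - α) / 2 + -(1 + α) / 2 = -1 by ring, rpow_one, rpow_neg_one, div_eq_mul_inv]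
    _ = _ := by ring

theorem enorm_integral_near_diagonal_sq_le_mul (α : ℝ) {g : ℝ → ℂ} (hg : Measurable g) (N : ℝ) :
    ‖∫ ν in Ioo 0 (N - 1), (ν : ℂ) * g ν / ((N - ν : ℝ) : ℂ)‖ₑ ^ 2
      ≤ (∫⁻ ν in Ioo 0 (N - 1), ENNReal.ofReal (ν ^ (2 * α + 2) * ‖g ν‖ ^ 2)
            * ENNReal.ofReal ((N - ν) ^ (-(1 - α))))
        * ∫⁻ ν in Ioo 0 (N - 1), ENNReal.ofReal (ν ^ (-(2 * α)) * (N - ν) ^ (-(1 + α))) := by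
  set P := fun ν : ℝ => ENNReal.ofReal (ν ^ (α + 1) * ‖g ν‖ * (N - ν) ^ (-(1 - α) / 2))
  set Q := fun ν : ℝ => ENNReal.ofReal (ν ^ (-α) * (N - ν) ^ (-(1 + α) / 2))
  have hsplit : ∀ ν ∈ Ioo 0 (N - 1), ‖(ν : ℂ) * g ν / ((N - ν : ℝ) : ℂ)‖ₑ = P ν * Q ν := by
    intro ν ⟨hν, hνN⟩
    have hy : 0 < N - ν := by linarith
    rw [← ofReal_norm, ← ENNReal.ofReal_mul (by positivity), norm_div, norm_mul,
      Complex.norm_real, Complex.norm_real, norm_of_nonneg hν.le, norm_of_nonneg hy.le,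
      mul_div_eq_rpow_mul_rpow hν hy α]
  have hP : ∀ ν ∈ Ioo 0 (N - 1), P ν ^ 2 = ENNReal.ofReal (ν ^ (2 * α + 2) * ‖g ν‖ ^ 2)
      * ENNReal.ofReal ((N - ν) ^ (-(1 - α))) := by
    intro ν ⟨hν, hνN⟩
    have hy : 0 < N - ν := by linarith
    rw [← ENNReal.ofReal_pow (by positivity), ← ENNReal.ofReal_mul (by positivity), mul_pow,
      mul_pow, ← rpow_mul_natCast hν.le, ← rpow_mul_natCast hy.le]
    ring_nf
  have hQ : ∀ ν ∈ Ioo 0 (N - 1),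
      Q ν ^ 2 = ENNReal.ofReal (ν ^ (-(2 * α)) * (N - ν) ^ (-(1 + α))) := by
    intro ν ⟨hν, hνN⟩
    have hy : 0 < N - ν := by linarith
    rw [← ENNReal.ofReal_pow (by positivity), mul_pow, ← rpow_mul_natCast hν.le,
      ← rpow_mul_natCast hy.le]
    ring_nf
  rw [← setLIntegral_congr_fun measurableSet_Ioo hP,
    ← setLIntegral_congr_fun measurableSet_Ioo hQ]
  exact enorm_integral_sq_le_lintegral_sq_mul (by fun_prop) (by fun_prop)
    (ae_restrict_of_forall_mem measurableSet_Ioo fun ν hν => (hsplit ν hν).le)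

theorem enorm_integral_near_diagonal_sq_le {α : ℝ} (hα₀ : 0 < α) (hα : α < 1 / 2) {g : ℝ → ℂ}
    (hg : Measurable g) {N : ℝ} (hN : 2 ≤ N) :
    ‖∫ ν in Ioo 0 (N - 1), (ν : ℂ) * g ν / ((N - ν : ℝ) : ℂ)‖ₑ ^ 2
      ≤ ENNReal.ofReal (2 ^ (2 * α) * (1 / (1 - 2 * α) + 1 / α))
        * ∫⁻ ν in Ioo 0 (N - 1), ENNReal.ofReal (ν ^ (2 * α + 2) * ‖g ν‖ ^ 2)
            * ENNReal.ofReal ((N - ν) ^ (-(1 + α))) := by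
  set C := 2 ^ (2 * α) * (1 / (1 - 2 * α) + 1 / α)
  have hJ := lintegral_Ioo_rpow_neg_mul_sub_rpow_neg_le (a := 2 * α) (b := 1 + α)
    (by linarith) (by linarith) (by linarith) hN
  rw [add_sub_cancel_left] at hJ
  calc _ ≤ _ := enorm_integral_near_diagonal_sq_le_mul α hg N
    _ ≤ (∫⁻ ν in Ioo 0 (N - 1), ENNReal.ofReal (ν ^ (2 * α + 2) * ‖g ν‖ ^ 2)
            * ENNReal.ofReal ((N - ν) ^ (-(1 - α)))) * ENNReal.ofReal (C * N ^ (-(2 * α))) := by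
        gcongr
    _ ≤ _ := by
        rw [mul_comm, ENNReal.ofReal_mul' (by positivity), mul_assoc,
          ← lintegral_const_mul' _ _ ENNReal.ofReal_ne_top]
        gcongr ENNReal.ofReal C * ?_
        refine setLIntegral_mono (by fun_prop) fun ν ⟨hν, hνN⟩ => ?_
        have hy : 0 < N - ν := by linarith
        rw [mul_left_comm, ← ENNReal.ofReal_mul (by positivity)]
        gcongr _ * ENNReal.ofReal ?_
        calc N ^ (-(2 * α)) * (N - ν) ^ (-(1 - α))
            ≤ (N - ν) ^ (-(2 * α)) * (N - ν) ^ (-(1 - α)) :=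
              mul_le_mul_of_nonneg_right (rpow_le_rpow_of_nonpos hy (by linarith) (by linarith))
                (rpow_nonneg hy.le _)
          _ = (N - ν) ^ (-(1 + α)) := by
              rw [← rpow_add hy]
              ring_nf

theorem tsum_indicator_sub_rpow_neg_le {s ν : ℝ} (hs : 0 ≤ s) (hν : 0 ≤ ν) :
    ∑' n : ℕ, (Ioo 0 (((n + 2 : ℕ) : ℝ) - 1)).indicator
        (fun x => ENNReal.ofReal ((((n + 2 : ℕ) : ℝ) - x) ^ (-s))) ν
      ≤ ∑' k : ℕ, ENNReal.ofReal (((k : ℝ) + 1) ^ (-s)) := by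
  set m := ⌊ν⌋₊
  have hvanish : ∀ n < m, (Ioo 0 (((n + 2 : ℕ) : ℝ) - 1)).indicator
      (fun x => ENNReal.ofReal ((((n + 2 : ℕ) : ℝ) - x) ^ (-s))) ν = 0 := by
    intro n hn
    refine indicator_of_notMem (fun hmem => ?_) _
    have hn_le : ((n + 1 : ℕ) : ℝ) ≤ ν := (Nat.cast_le.2 hn).trans (Nat.floor_le hν)
    have := hmem.2
    push_cast at this hn_le
    linarith
  rw [← ENNReal.summable.sum_add_tsum_nat_add' (k := m),
    Finset.sum_eq_zero fun n hn => hvanish n (Finset.mem_range.1 hn), zero_add]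
  refine ENNReal.tsum_le_tsum fun k => (indicator_le_self _ _ _).trans ?_
  have hν_lt : ν < m + 1 := Nat.lt_floor_add_one ν
  refine ENNReal.ofReal_le_ofReal (rpow_le_rpow_of_nonpos (by positivity) ?_ (by linarith))
  push_cast
  linarith

theorem tsum_lintegral_near_diagonal_le {s : ℝ} (hs : 0 ≤ s) {h : ℝ → ℝ≥0∞} (hh : Measurable h) :
    ∑' n : ℕ, ∫⁻ ν in Ioo 0 (((n + 2 : ℕ) : ℝ) - 1),
        h ν * ENNReal.ofReal ((((n + 2 : ℕ) : ℝ) - ν) ^ (-s))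
      ≤ (∑' k : ℕ, ENNReal.ofReal (((k : ℝ) + 1) ^ (-s))) * ∫⁻ ν in Ioi 0, h ν := by
  have hrestrict : ∀ n : ℕ, ∫⁻ ν in Ioo 0 (((n + 2 : ℕ) : ℝ) - 1),
        h ν * ENNReal.ofReal ((((n + 2 : ℕ) : ℝ) - ν) ^ (-s))
      = ∫⁻ ν in Ioi 0, h ν * (Ioo 0 (((n + 2 : ℕ) : ℝ) - 1)).indicator
          (fun x => ENNReal.ofReal ((((n + 2 : ℕ) : ℝ) - x) ^ (-s))) ν := by
    intro n
    simp_rw [← indicator_mul_right]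
    rw [lintegral_indicator measurableSet_Ioo, Measure.restrict_restrict measurableSet_Ioo,
      inter_eq_left.2 fun x hx => hx.1]
  simp_rw [hrestrict]
  rw [← lintegral_tsum fun n => ?_, ← lintegral_const_mul _ hh]
  · refine setLIntegral_mono (by fun_prop) fun ν hν => ?_
    rw [ENNReal.tsum_mul_left, mul_comm _ (h ν)]
    exact mul_le_mul_right (tsum_indicator_sub_rpow_neg_le hs hν.out.le) _
  · exact (hh.mul ((by fun_prop : Measurable _).indicator measurableSet_Ioo)).aemeasurable

theorem near_diagonal_kernel_estimate (α : ℝ) (hα0 : 0 < α) (hα : α < 1/2) :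
    ∃ C : ℝ, 0 < C ∧ ∀ g : ℝ → ℂ, Measurable g →
      (∫⁻ ν in Set.Ioi (0 : ℝ),
          ENNReal.ofReal (ν ^ (2 * α + 2) * ‖g ν‖ ^ 2)) < ⊤ →
      (∑' n : ℕ, ENNReal.ofReal (‖
          (∫ ν in Set.Ioo (0 : ℝ) (((n + 2 : ℕ) : ℝ) - 1),
            (ν : ℂ) * g ν / ((((n + 2 : ℕ) : ℝ) - ν : ℝ) : ℂ))‖ ^ 2))
        ≤ ENNReal.ofReal C *
          ∫⁻ ν in Set.Ioi (0 : ℝ),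
            ENNReal.ofReal (ν ^ (2 * α + 2) * ‖g ν‖ ^ 2) := by
  have hsum : Summable fun k : ℕ => ((k : ℝ) + 1) ^ (-(1 + α)) := by
    simpa using (summable_nat_add_iff 1).2 (summable_nat_rpow.2 (by linarith : -(1 + α) < -1))
  set K := ∑' k : ℕ, ((k : ℝ) + 1) ^ (-(1 + α))
  set C := 2 ^ (2 * α) * (1 / (1 - 2 * α) + 1 / α)
  have hK : 0 < K := hsum.tsum_pos (fun k => by positivity) 0 (by positivity)
  have hC : 0 < C := by
    have : 0 < 1 - 2 * α := by linarith
    positivity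
  refine ⟨C * K, mul_pos hC hK, fun g hg _ => ?_⟩
  simp_rw [ENNReal.ofReal_pow (norm_nonneg _), ofReal_norm]
  calc _ ≤ ∑' n : ℕ, ENNReal.ofReal C * ∫⁻ ν in Ioo 0 (((n + 2 : ℕ) : ℝ) - 1),
          ENNReal.ofReal (ν ^ (2 * α + 2) * ‖g ν‖ ^ 2)
            * ENNReal.ofReal ((((n + 2 : ℕ) : ℝ) - ν) ^ (-(1 + α))) :=
        ENNReal.tsum_le_tsum fun n =>
          enorm_integral_near_diagonal_sq_le hα0 hα hg (by push_cast; linarith)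
    _ ≤ ENNReal.ofReal C * (ENNReal.ofReal K
          * ∫⁻ ν in Ioi 0, ENNReal.ofReal (ν ^ (2 * α + 2) * ‖g ν‖ ^ 2)) := by
        rw [ENNReal.tsum_mul_left, ENNReal.ofReal_tsum_of_nonneg (fun k => by positivity) hsum]
        gcongr
        exact tsum_lintegral_near_diagonal_le (by linarith) (by fun_prop)
    _ = _ := by rw [ENNReal.ofReal_mul hC.le, mul_assoc]
end

section
/- For every real α with 0 < α < 1/2 there exists a constant C > 0 such that for every measurable function g : (0,∞) → ℂ with ∫_0^∞ ν^{2α+2}|g(ν)|² dν finite, one has ∑_{n=1}^∞ | ∫_{n+1}^∞ ν·g(ν)/(ν − n) dν |² ≤ C · ∫_0^∞ ν^{2α+2} |g(ν)|² dν. -/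
open MeasureTheory Real Set
open scoped ENNReal

/-!
With `h ν = ν ^ (α + 1) * ‖g ν‖` and `γ = 2α`, Cauchy–Schwarz against the weight
`(ν - n) ^ (-γ - 1)`, whose integral over `(n + 1, ∞)` is `1 / γ`, gives
`|∫_{n+1}^∞ ν g(ν) / (ν - n) dν|² ≤ γ⁻¹ ∫_{n+1}^∞ (ν - n) ^ (γ - 1) ν ^ (-γ) h(ν)² dν`.
Summing over `n` inside the integral (Tonelli), it remains to see that
`∑_{1 ≤ n < ν - 1} (ν - n) ^ (γ - 1) ≤ ν ^ γ / γ`. Since `γ ≤ 1`, Bernoulli's inequality bounds each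
term by `((ν - n) ^ γ - (ν - n - 1) ^ γ) / γ`, and these telescope. So `C = (2α)⁻²` works.
-/

theorem mul_rpow_sub_one_le_rpow_sub_rpow {γ y : ℝ} (hγ0 : 0 ≤ γ) (hγ1 : γ ≤ 1) (hy : 1 ≤ y) :
    γ * y ^ (γ - 1) ≤ y ^ γ - (y - 1) ^ γ := by
  have hy0 : 0 < y := by linarith
  have bernoulli : (1 + -y⁻¹) ^ γ ≤ 1 + γ * -y⁻¹ :=
    rpow_one_add_le_one_add_mul_self (by linarith [inv_le_one_of_one_le₀ hy]) hγ0 hγ1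
  have hsplit : (y - 1) ^ γ = y ^ γ * (1 + -y⁻¹) ^ γ := by
    rw [← mul_rpow hy0.le (by linarith [inv_le_one_of_one_le₀ hy])]
    congr 1
    field_simp
    ring
  calc γ * y ^ (γ - 1) = y ^ γ - y ^ γ * (1 + γ * -y⁻¹) := by
        rw [rpow_sub_one hy0.ne']
        ring
    _ ≤ y ^ γ - (y - 1) ^ γ := by
        rw [hsplit]
        gcongr

theorem sum_range_rpow_sub_natCast_le {γ ν : ℝ} (hγ0 : 0 < γ) (hγ1 : γ ≤ 1) {m : ℕ}
    (hm : (m : ℝ) ≤ ν) :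
    ∑ n ∈ Finset.range m, (ν - n) ^ (γ - 1) ≤ ν ^ γ / γ := by
  have hterm : ∀ n ∈ Finset.range m,
      (ν - n) ^ (γ - 1) ≤ ((ν - n) ^ γ - (ν - ↑(n + 1)) ^ γ) / γ := by
    intro n hn
    have hnm : (n : ℝ) + 1 ≤ m := by exact_mod_cast Finset.mem_range.mp hn
    rw [le_div_iff₀ hγ0, Nat.cast_succ, ← sub_sub, mul_comm]
    exact mul_rpow_sub_one_le_rpow_sub_rpow hγ0.le hγ1 (by linarith)
  calc ∑ n ∈ Finset.range m, (ν - n) ^ (γ - 1)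
      ≤ ∑ n ∈ Finset.range m, ((ν - n) ^ γ - (ν - ↑(n + 1)) ^ γ) / γ := Finset.sum_le_sum hterm
    _ = (ν ^ γ - (ν - m) ^ γ) / γ := by
        rw [← Finset.sum_div, Finset.sum_range_sub' (fun n : ℕ => (ν - n) ^ γ), Nat.cast_zero,
          sub_zero]
    _ ≤ ν ^ γ / γ := by
        gcongr
        exact sub_le_self _ (rpow_nonneg (by linarith) _)

theorem tsum_indicator_rpow_sub_mul_rpow_neg_le {γ : ℝ} (hγ0 : 0 < γ) (hγ1 : γ ≤ 1) (ν : ℝ) :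
    ∑' n : ℕ+, (Ioi ((n : ℝ) + 1)).indicator
        (fun x => ENNReal.ofReal ((x - n) ^ (γ - 1) * x ^ (-γ))) ν ≤ ENNReal.ofReal (1 / γ) := by
  set F : ℕ → ℝ≥0∞ := fun n =>
    (Ioi ((n : ℝ) + 1)).indicator (fun x => ENNReal.ofReal ((x - n) ^ (γ - 1) * x ^ (-γ))) ν
  rcases le_or_gt ν 0 with hν | hν
  · have hzero : ∀ n, F n = 0 := fun n =>
      indicator_of_notMem (fun h => by linarith [mem_Ioi.mp h, n.cast_nonneg (α := ℝ)]) _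
    calc ∑' n : ℕ+, F n = 0 := by simp [hzero]
      _ ≤ _ := zero_le
  have hsupp : ∀ n ∉ Finset.range ⌊ν⌋₊, F n = 0 := by
    intro n hn
    refine indicator_of_notMem (fun h => hn (Finset.mem_range.mpr (Nat.le_floor ?_))) _
    push_cast
    exact (mem_Ioi.mp h).le
  calc ∑' n : ℕ+, F n ≤ ∑' n : ℕ, F n := ENNReal.tsum_comp_le_tsum_of_injective PNat.coe_injective F
    _ = ∑ n ∈ Finset.range ⌊ν⌋₊, F n := tsum_eq_sum hsupp
    _ ≤ ∑ n ∈ Finset.range ⌊ν⌋₊, ENNReal.ofReal ((ν - n) ^ (γ - 1) * ν ^ (-γ)) :=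
        Finset.sum_le_sum fun n _ => indicator_le_self _ _ ν
    _ = ENNReal.ofReal ((∑ n ∈ Finset.range ⌊ν⌋₊, (ν - n) ^ (γ - 1)) * ν ^ (-γ)) := by
        rw [Finset.sum_mul, ENNReal.ofReal_sum_of_nonneg]
        intro n hn
        have : (n : ℝ) < ν := Nat.lt_of_lt_floor (Finset.mem_range.mp hn)
        exact mul_nonneg (rpow_nonneg (by linarith) _) (rpow_nonneg hν.le _)
    _ ≤ ENNReal.ofReal (1 / γ) := by
        refine ENNReal.ofReal_le_ofReal ?_
        calc (∑ n ∈ Finset.range ⌊ν⌋₊, (ν - n) ^ (γ - 1)) * ν ^ (-γ) ≤ ν ^ γ / γ * ν ^ (-γ) :=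
              by gcongr; exact sum_range_rpow_sub_natCast_le hγ0 hγ1 (Nat.floor_le hν.le)
          _ = 1 / γ := by
              rw [div_mul_eq_mul_div, ← rpow_add hν, add_neg_cancel, rpow_zero]

theorem setLIntegral_Ioi_add_one_rpow_sub {γ : ℝ} (hγ : 0 < γ) (N : ℝ) :
    ∫⁻ ν in Ioi (N + 1), ENNReal.ofReal ((ν - N) ^ (-γ - 1)) = ENNReal.ofReal (1 / γ) := by
  rw [add_comm, ← preimage_sub_const_Ioi N 1,
    (measurePreserving_sub_right volume N).setLIntegral_comp_preimage_emb
      (measurableEmbedding_subRight N) (fun t => ENNReal.ofReal (t ^ (-γ - 1))),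
    ← ofReal_integral_eq_lintegral_ofReal (integrableOn_Ioi_rpow_of_lt (by linarith) one_pos),
    integral_Ioi_rpow_of_lt (by linarith) one_pos]
  · congr 1
    rw [sub_add_cancel, one_rpow]
    field_simp
  · filter_upwards [ae_restrict_mem measurableSet_Ioi] with t ht
    exact rpow_nonneg (zero_lt_one.trans ht).le _

theorem enorm_integral_sq_le_of_enorm_sq_le_mul {X E : Type*} [MeasurableSpace X]
    [NormedAddCommGroup E] [NormedSpace ℝ E] {μ : Measure X} {f : X → E} {a b : X → ℝ≥0∞}
    (ha : AEMeasurable a μ) (hb : AEMeasurable b μ) (hfab : ∀ᵐ x ∂μ, ‖f x‖ₑ ^ 2 ≤ a x * b x) :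
    ‖∫ x, f x ∂μ‖ₑ ^ 2 ≤ (∫⁻ x, a x ∂μ) * ∫⁻ x, b x ∂μ := by
  have hsq : ∀ x : ℝ≥0∞, (x ^ (2⁻¹ : ℝ)) ^ 2 = x := fun x => by
    simpa using ENNReal.rpow_inv_rpow two_ne_zero x
  have hpt : ∀ᵐ x ∂μ, ‖f x‖ₑ ≤ a x ^ (2⁻¹ : ℝ) * b x ^ (2⁻¹ : ℝ) := by
    filter_upwards [hfab] with x hx
    rw [← ENNReal.mul_rpow_of_nonneg _ _ (by norm_num)]
    calc ‖f x‖ₑ = (‖f x‖ₑ ^ 2) ^ (2⁻¹ : ℝ) := by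
          simpa using (ENNReal.pow_rpow_inv_natCast two_ne_zero _).symm
      _ ≤ (a x * b x) ^ (2⁻¹ : ℝ) := ENNReal.rpow_le_rpow hx (by norm_num)
  calc ‖∫ x, f x ∂μ‖ₑ ^ 2 ≤ (∫⁻ x, ‖f x‖ₑ ∂μ) ^ 2 :=
        pow_le_pow_left' (enorm_integral_le_lintegral_enorm f) 2
    _ ≤ (∫⁻ x, a x ^ (2⁻¹ : ℝ) * b x ^ (2⁻¹ : ℝ) ∂μ) ^ 2 :=
        pow_le_pow_left' (lintegral_mono_ae hpt) 2
    _ ≤ ((∫⁻ x, a x ∂μ) ^ (2⁻¹ : ℝ) * (∫⁻ x, b x ∂μ) ^ (2⁻¹ : ℝ)) ^ 2 := by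
        gcongr
        exact ENNReal.lintegral_mul_norm_pow_le ha hb (by norm_num) (by norm_num) (by norm_num)
    _ = (∫⁻ x, a x ∂μ) * ∫⁻ x, b x ∂μ := by rw [mul_pow, hsq, hsq]

theorem ofReal_norm_integral_Ioi_sq_le {α γ N : ℝ} (hγ : 0 < γ) (hN : 0 ≤ N + 1) {g : ℝ → ℂ}
    (hg : Measurable g) :
    ENNReal.ofReal (‖∫ ν in Ioi (N + 1), (ν : ℂ) * g ν / ((ν - N : ℝ) : ℂ)‖ ^ 2)
      ≤ ENNReal.ofReal (1 / γ) * ∫⁻ ν in Ioi (N + 1),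
          ENNReal.ofReal ((ν - N) ^ (γ - 1) * ν ^ (-(2 * α))) *
            ENNReal.ofReal (ν ^ (2 * α + 2) * ‖g ν‖ ^ 2) := by
  rw [ENNReal.ofReal_pow (norm_nonneg _), ofReal_norm, ← setLIntegral_Ioi_add_one_rpow_sub hγ N]
  refine enorm_integral_sq_le_of_enorm_sq_le_mul (by fun_prop) (by fun_prop) ?_
  filter_upwards [ae_restrict_mem measurableSet_Ioi] with ν hν
  have hν0 : 0 < ν := hN.trans_lt hν
  have hνN : 0 < ν - N := by linarith [mem_Ioi.mp hν]
  have hsplit : ‖(ν : ℂ) * g ν / ((ν - N : ℝ) : ℂ)‖ ^ 2 = (ν - N) ^ (-γ - 1) *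
      ((ν - N) ^ (γ - 1) * ν ^ (-(2 * α)) * (ν ^ (2 * α + 2) * ‖g ν‖ ^ 2)) := by
    have hνN2 : (ν - N) ^ (-γ - 1) * (ν - N) ^ (γ - 1) = ((ν - N) ^ 2)⁻¹ := by
      rw [← rpow_add hνN, show -γ - 1 + (γ - 1) = -(2 : ℕ) by push_cast; ring, rpow_neg hνN.le,
        rpow_natCast]
    have hν2 : ν ^ (-(2 * α)) * ν ^ (2 * α + 2) = ν ^ 2 := by
      rw [← rpow_add hν0, show -(2 * α) + (2 * α + 2) = (2 : ℕ) by push_cast; ring, rpow_natCast]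
    rw [norm_div, norm_mul, Complex.norm_real, Complex.norm_real, Real.norm_of_nonneg hν0.le,
      Real.norm_of_nonneg hνN.le]
    calc (ν * ‖g ν‖ / (ν - N)) ^ 2 = ((ν - N) ^ 2)⁻¹ * ν ^ 2 * ‖g ν‖ ^ 2 := by
          rw [div_pow, mul_pow]
          ring
      _ = _ := by
          rw [← hνN2, ← hν2]
          ring
  rw [← ofReal_norm, ← ENNReal.ofReal_pow (norm_nonneg _), hsplit,
    ENNReal.ofReal_mul (by positivity), ENNReal.ofReal_mul (by positivity)]

theorem tsum_setLIntegral_mul_le {X ι : Type*} [MeasurableSpace X] [Countable ι] {μ : Measure X}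
    {s : Set X} {t : ι → Set X} {k : ι → X → ℝ≥0∞} {H : X → ℝ≥0∞} {c : ℝ≥0∞}
    (hs : MeasurableSet s) (ht : ∀ i, MeasurableSet (t i)) (hts : ∀ i, t i ⊆ s)
    (hk : ∀ i, AEMeasurable (k i) μ) (hH : AEMeasurable H μ)
    (hc : ∀ x ∈ s, ∑' i, (t i).indicator (k i) x ≤ c) :
    ∑' i, ∫⁻ x in t i, k i x * H x ∂μ ≤ c * ∫⁻ x in s, H x ∂μ := by
  have hrestrict : ∀ i, ∫⁻ x in t i, k i x * H x ∂μ =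
      ∫⁻ x in s, (t i).indicator (k i) x * H x ∂μ := by
    intro i
    simp_rw [← indicator_mul_left]
    rw [lintegral_indicator (ht i), Measure.restrict_restrict (ht i), inter_eq_left.mpr (hts i)]
  calc ∑' i, ∫⁻ x in t i, k i x * H x ∂μ
      = ∑' i, ∫⁻ x in s, (t i).indicator (k i) x * H x ∂μ := tsum_congr hrestrict
    _ = ∫⁻ x in s, ∑' i, (t i).indicator (k i) x * H x ∂μ :=
        (lintegral_tsum fun i => (((hk i).indicator (ht i)).mul hH).restrict).symm
    _ ≤ ∫⁻ x in s, c * H x ∂μ := by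
        refine setLIntegral_mono' hs fun x hx => ?_
        rw [ENNReal.tsum_mul_right]
        gcongr
        exact hc x hx
    _ = c * ∫⁻ x in s, H x ∂μ := lintegral_const_mul'' c hH.restrict

theorem tail_kernel_estimate (α : ℝ) (hα0 : 0 < α) (hα : α < 1/2) :
    ∃ C : ℝ, 0 < C ∧ ∀ g : ℝ → ℂ, Measurable g →
      (∫⁻ ν in Set.Ioi (0 : ℝ),
          ENNReal.ofReal (ν ^ (2 * α + 2) * ‖g ν‖ ^ 2)) < ⊤ →
      (∑' n : ℕ+, ENNReal.ofReal (‖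
          (∫ ν in Set.Ioi ((n : ℝ) + 1),
            (ν : ℂ) * g ν / ((ν - (n : ℝ) : ℝ) : ℂ))‖ ^ 2))
        ≤ ENNReal.ofReal C *
          ∫⁻ ν in Set.Ioi (0 : ℝ),
            ENNReal.ofReal (ν ^ (2 * α + 2) * ‖g ν‖ ^ 2) := by
  have hγ0 : 0 < 2 * α := by positivity
  have hγ1 : 2 * α ≤ 1 := by linarith
  refine ⟨1 / (2 * α) * (1 / (2 * α)), by positivity, fun g hg _ => ?_⟩
  calc _ ≤ ∑' n : ℕ+, ENNReal.ofReal (1 / (2 * α)) * ∫⁻ ν in Ioi ((n : ℝ) + 1),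
          ENNReal.ofReal ((ν - n) ^ (2 * α - 1) * ν ^ (-(2 * α))) *
            ENNReal.ofReal (ν ^ (2 * α + 2) * ‖g ν‖ ^ 2) :=
        ENNReal.tsum_le_tsum fun n => ofReal_norm_integral_Ioi_sq_le hγ0 (by positivity) hg
    _ = ENNReal.ofReal (1 / (2 * α)) * ∑' n : ℕ+, ∫⁻ ν in Ioi ((n : ℝ) + 1),
          ENNReal.ofReal ((ν - n) ^ (2 * α - 1) * ν ^ (-(2 * α))) *
            ENNReal.ofReal (ν ^ (2 * α + 2) * ‖g ν‖ ^ 2) := ENNReal.tsum_mul_left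
    _ ≤ ENNReal.ofReal (1 / (2 * α)) * (ENNReal.ofReal (1 / (2 * α)) *
          ∫⁻ ν in Ioi 0, ENNReal.ofReal (ν ^ (2 * α + 2) * ‖g ν‖ ^ 2)) := by
        gcongr
        exact tsum_setLIntegral_mul_le measurableSet_Ioi (fun _ => measurableSet_Ioi)
          (fun n => Ioi_subset_Ioi (by positivity)) (fun _ => by fun_prop) (by fun_prop)
          fun ν _ => tsum_indicator_rpow_sub_mul_rpow_neg_le hγ0 hγ1 ν
    _ = _ := by rw [ENNReal.ofReal_mul (by positivity), mul_assoc]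
end

section
/- Let σ be a real number with 0 < σ < 1 and let g : ℝ × (0,∞) → ℂ be measurable. Suppose ∫_ℝ ∫_0^∞ (1+λ)|g(ξ,λ)|² dλ dξ is finite. Then ∫_ℝ ( ∫_0^∞ |g(ξ,λ)| · (1 + √(ξ² + λ))^{σ−1} dλ )² dξ ≤ (1/(1−σ)) · ∫_ℝ ∫_0^∞ (1+λ)|g(ξ,λ)|² dλ dξ. -/
open MeasureTheory Real
open scoped ENNReal

theorem sq_lintegral_ofReal_mul_le_of_weight {α : Type*} [MeasurableSpace α] {μ : Measure α}
    {f w v : α → ℝ} (hf : AEMeasurable f μ) (hw : AEMeasurable w μ) (hv : AEMeasurable v μ)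
    (hf0 : ∀ a, 0 ≤ f a) (hw0 : ∀ a, 0 ≤ w a) (hv0 : ∀ᵐ a ∂μ, 0 < v a) :
    (∫⁻ a, ENNReal.ofReal (f a * w a) ∂μ) ^ 2 ≤
      (∫⁻ a, ENNReal.ofReal (v a * f a ^ 2) ∂μ) * ∫⁻ a, ENNReal.ofReal (w a ^ 2 / v a) ∂μ := by
  have hsplit : ∀ᵐ a ∂μ, ENNReal.ofReal (f a * w a) =
      ENNReal.ofReal (√(v a) * f a) * ENNReal.ofReal (w a / √(v a)) := by
    filter_upwards [hv0] with a ha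
    rw [← ENNReal.ofReal_mul (mul_nonneg (sqrt_nonneg _) (hf0 a))]
    congr 1
    field_simp
  have hleft : ∀ᵐ a ∂μ, ENNReal.ofReal (√(v a) * f a) ^ 2 = ENNReal.ofReal (v a * f a ^ 2) := by
    filter_upwards [hv0] with a ha
    rw [← ENNReal.ofReal_pow (mul_nonneg (sqrt_nonneg _) (hf0 a)), mul_pow, sq_sqrt ha.le]
  have hright : ∀ᵐ a ∂μ, ENNReal.ofReal (w a / √(v a)) ^ 2 = ENNReal.ofReal (w a ^ 2 / v a) := by
    filter_upwards [hv0] with a ha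
    rw [← ENNReal.ofReal_pow (div_nonneg (hw0 a) (sqrt_nonneg _)), div_pow, sq_sqrt ha.le]
  rw [lintegral_congr_ae hsplit, ← lintegral_congr_ae hleft, ← lintegral_congr_ae hright]
  exact ENNReal.sq_lintegral_mul_le (by fun_prop) (by fun_prop)

theorem one_add_sqrt_rpow_sq_le {σ : ℝ} (hσ : σ ≤ 1) (ξ : ℝ) {l : ℝ} (hl : 0 ≤ l) :
    ((1 + √(ξ ^ 2 + l)) ^ (σ - 1)) ^ 2 ≤ (1 + l) ^ (σ - 1) := by
  have hs : 0 ≤ √(ξ ^ 2 + l) := sqrt_nonneg _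
  have hsq : 1 + l ≤ (1 + √(ξ ^ 2 + l)) ^ 2 := by
    nlinarith [sq_sqrt (by positivity : 0 ≤ ξ ^ 2 + l), sq_nonneg ξ]
  rw [← rpow_mul_natCast (by positivity), mul_comm, rpow_natCast_mul (by positivity)]
  exact rpow_le_rpow_of_nonpos (by positivity) hsq (by linarith)

theorem lintegral_Ioi_one_add_rpow {s : ℝ} (hs : s < -1) :
    ∫⁻ l in Set.Ioi (0 : ℝ), ENNReal.ofReal ((1 + l) ^ s) = ENNReal.ofReal (-1 / (s + 1)) := by
  have hshift : ∫⁻ l in Set.Ioi (0 : ℝ), ENNReal.ofReal ((1 + l) ^ s)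
      = ∫⁻ u in Set.Ioi (1 : ℝ), ENNReal.ofReal (u ^ s) := by
    have hpre : (fun x : ℝ => 1 + x) ⁻¹' Set.Ioi 1 = Set.Ioi 0 := by
      rw [Set.preimage_const_add_Ioi, sub_self]
    rw [← hpre]
    exact (measurePreserving_add_left volume (1 : ℝ)).setLIntegral_comp_preimage_emb
      (Homeomorph.addLeft (1 : ℝ)).measurableEmbedding (fun u => ENNReal.ofReal (u ^ s)) _
  rw [hshift, ← ofReal_integral_eq_lintegral_ofReal (integrableOn_Ioi_rpow_of_lt hs one_pos)
    (ae_restrict_of_forall_mem measurableSet_Ioi fun u hu => rpow_nonneg (one_pos.trans hu).le _),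
    integral_Ioi_rpow_of_lt hs one_pos, one_rpow]

theorem lintegral_Ioi_one_add_sqrt_rpow_sq_div_le {σ : ℝ} (hσ : σ < 1) (ξ : ℝ) :
    ∫⁻ l in Set.Ioi (0 : ℝ), ENNReal.ofReal (((1 + √(ξ ^ 2 + l)) ^ (σ - 1)) ^ 2 / (1 + l))
      ≤ ENNReal.ofReal (1 / (1 - σ)) :=
  calc ∫⁻ l in Set.Ioi (0 : ℝ), ENNReal.ofReal (((1 + √(ξ ^ 2 + l)) ^ (σ - 1)) ^ 2 / (1 + l))
      ≤ ∫⁻ l in Set.Ioi (0 : ℝ), ENNReal.ofReal ((1 + l) ^ (σ - 2)) := by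
        refine setLIntegral_mono' measurableSet_Ioi fun l (hl : 0 < l) => ?_
        have hl1 : 0 < 1 + l := by linarith
        rw [show σ - 2 = σ - 1 - 1 by ring, rpow_sub_one hl1.ne']
        gcongr
        exact one_add_sqrt_rpow_sq_le hσ.le ξ hl.le
    _ = ENNReal.ofReal (1 / (1 - σ)) := by
        rw [lintegral_Ioi_one_add_rpow (by linarith)]
        congr 1
        rw [div_eq_div_iff (by linarith) (by linarith)]
        ring

theorem weighted_schur_estimate_general (σ : ℝ) (hσ1 : σ < 1)
    (g : ℝ → ℝ → ℂ) (hg : Measurable (fun q : ℝ × ℝ => g q.1 q.2)) :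
    (∫⁻ ξ : ℝ, (∫⁻ l in Set.Ioi (0 : ℝ),
        ENNReal.ofReal (‖g ξ l‖ * (1 + Real.sqrt (ξ ^ 2 + l)) ^ (σ - 1))) ^ 2)
      ≤ ENNReal.ofReal (1 / (1 - σ)) *
        ∫⁻ ξ : ℝ, ∫⁻ l in Set.Ioi (0 : ℝ),
          ENNReal.ofReal ((1 + l) * ‖g ξ l‖ ^ 2) := by
  have hslice (ξ : ℝ) :
      (∫⁻ l in Set.Ioi (0 : ℝ),
        ENNReal.ofReal (‖g ξ l‖ * (1 + Real.sqrt (ξ ^ 2 + l)) ^ (σ - 1))) ^ 2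
      ≤ ENNReal.ofReal (1 / (1 - σ)) *
        ∫⁻ l in Set.Ioi (0 : ℝ), ENNReal.ofReal ((1 + l) * ‖g ξ l‖ ^ 2) := by
    have hgξ : Measurable fun l => ‖g ξ l‖ := (hg.comp measurable_prodMk_left).norm
    rw [mul_comm]
    refine (sq_lintegral_ofReal_mul_le_of_weight (w := fun l => (1 + √(ξ ^ 2 + l)) ^ (σ - 1))
      (v := fun l => 1 + l) hgξ.aemeasurable (by fun_prop) (by fun_prop)
      (fun _ => norm_nonneg _) (fun _ => by positivity)
      (ae_restrict_of_forall_mem measurableSet_Ioi fun l (hl : 0 < l) => by positivity)).trans ?_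
    exact mul_le_mul_right (lintegral_Ioi_one_add_sqrt_rpow_sq_div_le hσ1 ξ) _
  calc _ ≤ ∫⁻ ξ : ℝ, ENNReal.ofReal (1 / (1 - σ)) *
          ∫⁻ l in Set.Ioi (0 : ℝ), ENNReal.ofReal ((1 + l) * ‖g ξ l‖ ^ 2) := lintegral_mono hslice
    _ = _ := lintegral_const_mul' _ _ ENNReal.ofReal_ne_top

theorem weighted_schur_estimate (σ : ℝ) (hσ0 : 0 < σ) (hσ1 : σ < 1)
    (g : ℝ → ℝ → ℂ) (hg : Measurable (fun q : ℝ × ℝ => g q.1 q.2))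
    (hfin : (∫⁻ ξ : ℝ, ∫⁻ l in Set.Ioi (0 : ℝ),
        ENNReal.ofReal ((1 + l) * ‖g ξ l‖ ^ 2)) < ⊤) :
    (∫⁻ ξ : ℝ, (∫⁻ l in Set.Ioi (0 : ℝ),
        ENNReal.ofReal (‖g ξ l‖ * (1 + Real.sqrt (ξ ^ 2 + l)) ^ (σ - 1))) ^ 2)
      ≤ ENNReal.ofReal (1 / (1 - σ)) *
        ∫⁻ ξ : ℝ, ∫⁻ l in Set.Ioi (0 : ℝ),
          ENNReal.ofReal ((1 + l) * ‖g ξ l‖ ^ 2) :=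
  weighted_schur_estimate_general σ hσ1 g hg
end
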